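/- arXiv:math/0412526 — 8 statements merged into one kernel-verified Lean document; each statement's English description precedes it below -/
import Mathlib

section
/- Let p, q ≥ 0 with p + q ≤ r and let a ∈ C_{p,q}. Then there exists a neighborhood U of a in Herm(r) such that for every x ∈ U one has: x ∈ C_{p,q} if and only if rank(x) ≤ p + q. (In other words, in a neighborhood of a, the set C_{p,q} is cut out inside Herm(r) by the condition that the rank be at most p + q.) -/
open Matrix

/-- `Cpq r p q` is the set of Hermitian `r × r` complex matrices having exactly `p`
positive and exactly `q` negative eigenvalues, counted with multiplicity. -/
def Cpq (r p q : ℕ) : Set (Matrix (Fin r) (Fin r) ℂ) :=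
  {x | ∃ hx : x.IsHermitian,
    (Finset.univ.filter fun i => 0 < hx.eigenvalues i).card = p ∧
    (Finset.univ.filter fun i => hx.eigenvalues i < 0).card = q}

/-!
If `a` has `p` positive eigenvalues, the span of the corresponding eigenvectors is a
`p`-dimensional subspace on which the Hermitian form `v ↦ ⟪v, a v⟫` is positive definite.
Positive definiteness on a fixed subspace is an open condition (by compactness of its unit
sphere), and any subspace on which the form of `x` is positive definite meets the span of the
non-positive eigenvectors of `x` trivially, so has dimension at most the number of positive
eigenvalues of `x`. Hence near `a` every Hermitian `x` has at least `p` positive and, applying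
this to `-x`, at least `q` negative eigenvalues. As `rank x` is the number of nonzero
eigenvalues, `rank x ≤ p + q` forces both counts to be exact.
-/

open Finset Filter Topology
open scoped InnerProductSpace

section Eigenbasis

variable {𝕜 E ι : Type*} [RCLike 𝕜] [NormedAddCommGroup E] [InnerProductSpace 𝕜 E] [Fintype ι]

theorem OrthonormalBasis.inner_eq_zero_of_mem_span_image (b : OrthonormalBasis ι 𝕜 E)
    {P : Set ι} {v : E} (hv : v ∈ Submodule.span 𝕜 (b '' P)) {i : ι} (hi : i ∉ P) :
    ⟪b i, v⟫_𝕜 = 0 := by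
  rw [← b.coe_toBasis, Module.Basis.mem_span_image] at hv
  rw [← b.repr_apply_apply, ← b.coe_toBasis_repr_apply]
  exact Finsupp.notMem_support_iff.mp fun h => hi (hv h)

theorem OrthonormalBasis.finrank_span_image (b : OrthonormalBasis ι 𝕜 E) (P : Finset ι) :
    Module.finrank 𝕜 (Submodule.span 𝕜 (b '' P)) = #P := by
  have hli : LinearIndependent 𝕜 fun i : (P : Set ι) => b i :=
    b.orthonormal.linearIndependent.comp _ Subtype.val_injective
  rw [Set.image_eq_range, finrank_span_eq_card hli]
  simp

variable {T : E →ₗ[𝕜] E} {b : OrthonormalBasis ι 𝕜 E} {μ : ι → ℝ}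

theorem re_inner_apply_eq_sum (hT : ∀ i, T (b i) = (μ i : 𝕜) • b i) (v : E) :
    RCLike.re ⟪v, T v⟫_𝕜 = ∑ i, μ i * ‖⟪b i, v⟫_𝕜‖ ^ 2 := by
  have hTb : ∀ i, ⟪b i, T v⟫_𝕜 = μ i * ⟪b i, v⟫_𝕜 := by
    classical
    intro i
    conv_lhs => rw [← b.sum_repr' v]
    simp [hT, inner_sum, inner_smul_right, b.inner_eq_ite, mul_comm]
  rw [← b.sum_inner_mul_inner, map_sum]
  refine Finset.sum_congr rfl fun i _ => ?_
  rw [hTb, ← inner_conj_symm, mul_left_comm, RCLike.conj_mul]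
  norm_cast

theorem re_inner_apply_pos_of_mem_span (hT : ∀ i, T (b i) = (μ i : 𝕜) • b i) {P : Set ι}
    (hP : ∀ i ∈ P, 0 < μ i) {v : E} (hv : v ∈ Submodule.span 𝕜 (b '' P)) (hv0 : v ≠ 0) :
    0 < RCLike.re ⟪v, T v⟫_𝕜 := by
  obtain ⟨i, hi⟩ : ∃ i, ⟪b i, v⟫_𝕜 ≠ 0 := by
    by_contra! h
    exact hv0 (b.repr.injective (by ext i; simp [b.repr_apply_apply, h]))
  have hiP : i ∈ P := by_contra fun hiP => hi (b.inner_eq_zero_of_mem_span_image hv hiP)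
  rw [re_inner_apply_eq_sum hT]
  refine Finset.sum_pos' (fun j _ => ?_) ⟨i, mem_univ i, by have := hP i hiP; positivity⟩
  by_cases hj : j ∈ P
  · have := hP j hj
    positivity
  · simp [b.inner_eq_zero_of_mem_span_image hv hj]

theorem re_inner_apply_nonpos_of_mem_span (hT : ∀ i, T (b i) = (μ i : 𝕜) • b i) {P : Set ι}
    (hP : ∀ i ∈ P, μ i ≤ 0) {v : E} (hv : v ∈ Submodule.span 𝕜 (b '' P)) :
    RCLike.re ⟪v, T v⟫_𝕜 ≤ 0 := by
  rw [re_inner_apply_eq_sum hT]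
  refine Finset.sum_nonpos fun j _ => ?_
  by_cases hj : j ∈ P
  · exact mul_nonpos_of_nonpos_of_nonneg (hP j hj) (sq_nonneg _)
  · simp [b.inner_eq_zero_of_mem_span_image hv hj]

theorem finrank_le_card_pos_of_re_inner_pos (hT : ∀ i, T (b i) = (μ i : 𝕜) • b i)
    {W : Submodule 𝕜 E} (hW : ∀ v ∈ W, v ≠ 0 → 0 < RCLike.re ⟪v, T v⟫_𝕜) :
    Module.finrank 𝕜 W ≤ #{i | 0 < μ i} := by
  have := b.toBasis.finiteDimensional_of_finite
  have hdisj : Disjoint W (Submodule.span 𝕜 (b '' ↑(univ.filter fun i => ¬0 < μ i))) := by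
    refine Submodule.disjoint_def.mpr fun v hvW hvN => by_contra fun hv0 => ?_
    refine (hW v hvW hv0).not_ge (re_inner_apply_nonpos_of_mem_span hT (fun i hi => ?_) hvN)
    simpa using hi
  have hdim := Submodule.finrank_add_finrank_le_of_disjoint hdisj
  rw [b.finrank_span_image, Module.finrank_eq_card_basis b.toBasis] at hdim
  have hcard := card_filter_add_card_filter_not (s := univ) fun i => 0 < μ i
  rw [card_univ] at hcard
  omega

end Eigenbasis

section Semicontinuity

variable {𝕜 E X : Type*} [RCLike 𝕜] [NormedAddCommGroup E] [InnerProductSpace 𝕜 E]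
  [TopologicalSpace X]

theorem re_inner_smul_apply_smul (T : E →ₗ[𝕜] E) (c : ℝ) (v : E) :
    RCLike.re ⟪(c : 𝕜) • v, T ((c : 𝕜) • v)⟫_𝕜 = c ^ 2 * RCLike.re ⟪v, T v⟫_𝕜 := by
  rw [map_smul, inner_smul_left, inner_smul_right, RCLike.conj_ofReal, RCLike.re_ofReal_mul,
    RCLike.re_ofReal_mul]
  ring

theorem eventually_forall_re_inner_pos [FiniteDimensional 𝕜 E] {T : X → E →ₗ[𝕜] E}
    (hT : Continuous fun p : X × E => T p.1 p.2) {x₀ : X} {W : Submodule 𝕜 E}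
    (hW : ∀ v ∈ W, v ≠ 0 → 0 < RCLike.re ⟪v, T x₀ v⟫_𝕜) :
    ∀ᶠ x in 𝓝 x₀, ∀ v ∈ W, v ≠ 0 → 0 < RCLike.re ⟪v, T x v⟫_𝕜 := by
  have := FiniteDimensional.proper_rclike 𝕜 E
  have hK : IsCompact ((W : Set E) ∩ Metric.sphere 0 1) :=
    (isCompact_sphere 0 1).inter_left W.closed_of_finiteDimensional
  have hform : Continuous fun p : X × E => RCLike.re ⟪p.2, T p.1 p.2⟫_𝕜 := by fun_prop
  have hsphere : ∀ᶠ x in 𝓝 x₀, ∀ v ∈ (W : Set E) ∩ Metric.sphere 0 1,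
      0 < RCLike.re ⟪v, T x v⟫_𝕜 :=
    hK.eventually_forall_of_forall_eventually fun v hv =>
      continuousAt_const.eventually_lt hform.continuousAt
        (hW v hv.1 (ne_zero_of_mem_unit_sphere ⟨v, hv.2⟩))
  filter_upwards [hsphere] with x hx v hvW hv0
  have hnorm : 0 < ‖v‖ := norm_pos_iff.mpr hv0
  have hunit := hx (((‖v‖⁻¹ : ℝ) : 𝕜) • v)
    ⟨W.smul_mem _ hvW, by simp [norm_smul, hnorm.ne']⟩
  rw [re_inner_smul_apply_smul] at hunit
  exact pos_of_mul_pos_right hunit (by positivity)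

theorem eventually_card_pos_le {ι κ : Type*} [Fintype ι] [Fintype κ] {T : X → E →ₗ[𝕜] E}
    (hT : Continuous fun p : X × E => T p.1 p.2) {x₀ : X} {b : OrthonormalBasis ι 𝕜 E}
    {μ : ι → ℝ} (hb : ∀ i, T x₀ (b i) = (μ i : 𝕜) • b i) :
    ∀ᶠ x in 𝓝 x₀, ∀ (c : OrthonormalBasis κ 𝕜 E) (ν : κ → ℝ),
      (∀ i, T x (c i) = (ν i : 𝕜) • c i) → #{i | 0 < μ i} ≤ #{i | 0 < ν i} := by
  have := b.toBasis.finiteDimensional_of_finite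
  let W := Submodule.span 𝕜 (b '' ↑(univ.filter fun i => 0 < μ i))
  have hW : ∀ v ∈ W, v ≠ 0 → 0 < RCLike.re ⟪v, T x₀ v⟫_𝕜 :=
    fun v hv hv0 => re_inner_apply_pos_of_mem_span hb (by simp) hv hv0
  filter_upwards [eventually_forall_re_inner_pos hT hW] with x hx c ν hc
  rw [← b.finrank_span_image]
  exact finrank_le_card_pos_of_re_inner_pos hc hx

end Semicontinuity

section HermitianMatrix

variable {𝕜 n : Type*} [RCLike 𝕜] [Fintype n] [DecidableEq n]

theorem continuous_toEuclideanLin_apply :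
    Continuous fun p : Matrix n n 𝕜 × EuclideanSpace 𝕜 n => toEuclideanLin p.1 p.2 := by
  change Continuous fun p : Matrix n n 𝕜 × EuclideanSpace 𝕜 n =>
    WithLp.toLp 2 (p.1 *ᵥ p.2.ofLp)
  fun_prop

theorem Matrix.IsHermitian.toEuclideanLin_eigenvectorBasis {A : Matrix n n 𝕜}
    (hA : A.IsHermitian) (i : n) :
    toEuclideanLin A (hA.eigenvectorBasis i) =
      (hA.eigenvalues i : 𝕜) • hA.eigenvectorBasis i := by
  rw [toLpLin_apply, hA.mulVec_eigenvectorBasis, WithLp.toLp_smul, WithLp.toLp_ofLp,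
    RCLike.real_smul_eq_coe_smul (K := 𝕜)]

theorem Matrix.IsHermitian.rank_eq_card_pos_add_card_neg {A : Matrix n n 𝕜}
    (hA : A.IsHermitian) :
    A.rank = #{i | 0 < hA.eigenvalues i} + #{i | hA.eigenvalues i < 0} := by
  rw [hA.rank_eq_card_non_zero_eigs, Fintype.card_subtype, ← card_union_of_disjoint
    (disjoint_filter.mpr fun _ _ h₁ h₂ => h₁.not_gt h₂), ← filter_or]
  simp only [ne_iff_lt_or_gt, or_comm]

theorem Matrix.IsHermitian.eventually_card_pos_le {A : Matrix n n 𝕜} (hA : A.IsHermitian) :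
    ∀ᶠ X in 𝓝 A, ∀ hX : X.IsHermitian,
      #{i | 0 < hA.eigenvalues i} ≤ #{i | 0 < hX.eigenvalues i} := by
  filter_upwards [_root_.eventually_card_pos_le (κ := n)
    (T := fun X : Matrix n n 𝕜 => toEuclideanLin X) continuous_toEuclideanLin_apply
    hA.toEuclideanLin_eigenvectorBasis] with X hX' hX
  exact hX' _ _ hX.toEuclideanLin_eigenvectorBasis

theorem Matrix.IsHermitian.eventually_card_neg_le {A : Matrix n n 𝕜} (hA : A.IsHermitian) :
    ∀ᶠ X in 𝓝 A, ∀ hX : X.IsHermitian,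
      #{i | hA.eigenvalues i < 0} ≤ #{i | hX.eigenvalues i < 0} := by
  filter_upwards [_root_.eventually_card_pos_le (κ := n)
    (T := fun X : Matrix n n 𝕜 => -toEuclideanLin X) continuous_toEuclideanLin_apply.neg
    (b := hA.eigenvectorBasis) (μ := -hA.eigenvalues)
    fun i => by simp [hA.toEuclideanLin_eigenvectorBasis]] with X hX' hX
  simpa using hX' hX.eigenvectorBasis (-hX.eigenvalues)
    fun i => by simp [hX.toEuclideanLin_eigenvectorBasis]

end HermitianMatrix

theorem mem_Cpq_iff {r p q : ℕ} {x : Matrix (Fin r) (Fin r) ℂ} (hx : x.IsHermitian) :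
    x ∈ Cpq r p q ↔ #{i | 0 < hx.eigenvalues i} = p ∧ #{i | hx.eigenvalues i < 0} = q :=
  ⟨fun ⟨_, h⟩ => h, fun h => ⟨hx, h⟩⟩

theorem Cpq_locally_rank_le_general {r : ℕ} (p q : ℕ)
    (a : Matrix (Fin r) (Fin r) ℂ) (ha : a ∈ Cpq r p q) :
    ∃ U ∈ nhds a, ∀ x ∈ U, ∀ _ : Matrix.IsHermitian x,
      (x ∈ Cpq r p q ↔ x.rank ≤ p + q) := by
  obtain ⟨ha, rfl, rfl⟩ := ha
  refine ⟨_, ha.eventually_card_pos_le.and ha.eventually_card_neg_le,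
    fun x ⟨hpos, hneg⟩ hx => ?_⟩
  rw [mem_Cpq_iff hx, hx.rank_eq_card_pos_add_card_neg]
  have := hpos hx
  have := hneg hx
  omega

/-- Near any of its points `a`, the set `C_{p,q}` is cut out inside the Hermitian matrices by
the condition that the rank be at most `p + q`: there is a neighbourhood `U` of `a` such that
a Hermitian matrix `x ∈ U` lies in `C_{p,q}` if and only if `rank x ≤ p + q`. -/
theorem Cpq_locally_rank_le {r : ℕ} (hr : 1 ≤ r) (p q : ℕ) (hpq : p + q ≤ r)
    (a : Matrix (Fin r) (Fin r) ℂ) (ha : a ∈ Cpq r p q) :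
    ∃ U ∈ nhds a, ∀ x ∈ U, ∀ _ : Matrix.IsHermitian x,
      (x ∈ Cpq r p q ↔ x.rank ≤ p + q) :=
  Cpq_locally_rank_le_general p q a ha
end

section
/- Let a be a Hermitian r×r complex matrix such that λ + μ ≠ 0 for any two nonzero eigenvalues λ, μ of a (equivalently, no nonzero eigenvalue of a has its negative also an eigenvalue). Then {a v + v a : v ∈ Herm(r)} = {w ∈ Herm(r) : ⟨x, w y⟩ = 0 for all x, y ∈ ℂ^r with a x = 0 and a y = 0}, where ⟨·,·⟩ denotes the standard Hermitian inner product on ℂ^r. -/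
/-!
Conjugating by the unitary of eigenvectors of `a` reduces everything to `a = diagonal d` with `d`
real. There `(a * v + v * a) i j = (d i + d j) * v i j`, so a Hermitian `w` is reached by
`v i j = w i j / (d i + d j)` as soon as `w i j = 0` whenever `d i + d j = 0`; by the hypothesis on
the eigenvalues this happens only for `d i = d j = 0`, i.e. on the kernel block of `a`.
-/

namespace Matrix

variable {n : Type*} [Fintype n]

theorem IsHermitian.mul_add_mul {α : Type*} [NonUnitalSemiring α] [StarRing α]
    {a v : Matrix n n α} (ha : a.IsHermitian) (hv : v.IsHermitian) :
    (a * v + v * a).IsHermitian := by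
  rw [IsHermitian, conjTranspose_add, conjTranspose_mul, conjTranspose_mul, ha.eq, hv.eq,
    add_comm]

theorem IsHermitian.star_dotProduct_mul_add_mul_mulVec_eq_zero {α : Type*} [CommSemiring α]
    [StarRing α] {a : Matrix n n α} (ha : a.IsHermitian) (v : Matrix n n α) {x y : n → α}
    (hx : a *ᵥ x = 0) (hy : a *ᵥ y = 0) : star x ⬝ᵥ (a * v + v * a) *ᵥ y = 0 := by
  have hxa : star x ᵥ* a = 0 := by rw [← ha.eq, ← star_mulVec, hx, star_zero]
  rw [add_mulVec, dotProduct_add, ← mulVec_mulVec, ← mulVec_mulVec, dotProduct_mulVec, hxa, hy,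
    mulVec_zero, dotProduct_zero, zero_dotProduct, add_zero]

variable {𝕜 : Type*} [RCLike 𝕜] [DecidableEq n]

theorem exists_isHermitian_diagonal_mul_add_mul_diagonal_eq {d : n → ℝ}
    (hd : ∀ i j, d i ≠ 0 → d j ≠ 0 → d i + d j ≠ 0) {w : Matrix n n 𝕜} (hw : w.IsHermitian)
    (hw₀ : ∀ i j, d i = 0 → d j = 0 → w i j = 0) :
    ∃ v : Matrix n n 𝕜, v.IsHermitian ∧
      diagonal (RCLike.ofReal ∘ d) * v + v * diagonal (RCLike.ofReal ∘ d) = w := by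
  have hsum : ∀ i j, d i + d j = 0 → d i = 0 ∧ d j = 0 := by
    intro i j h
    by_cases hi : d i = 0
    · exact ⟨hi, by linarith⟩
    by_cases hj : d j = 0
    · exact absurd (by linarith) hi
    exact absurd h (hd i j hi hj)
  refine ⟨of fun i j => w i j / (d i + d j : ℝ), IsHermitian.ext fun i j => ?_, ext fun i j => ?_⟩
  · simp [hw.apply, add_comm]
  · simp only [add_apply, diagonal_mul, mul_diagonal, of_apply, Function.comp_apply]
    rcases eq_or_ne (d i + d j) 0 with h | h
    · obtain ⟨hi, hj⟩ := hsum i j h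
      simp [hi, hj, hw₀ i j hi hj]
    · have h' : ((d i + d j : ℝ) : 𝕜) ≠ 0 := RCLike.ofReal_ne_zero.mpr h
      field_simp
      push_cast
      ring

theorem IsHermitian.exists_isHermitian_mul_add_mul_eq {a : Matrix n n 𝕜} (ha : a.IsHermitian)
    (hnr : ∀ i j, ha.eigenvalues i ≠ 0 → ha.eigenvalues j ≠ 0 →
      ha.eigenvalues i + ha.eigenvalues j ≠ 0)
    {w : Matrix n n 𝕜} (hw : w.IsHermitian)
    (hker : ∀ x y, a *ᵥ x = 0 → a *ᵥ y = 0 → star x ⬝ᵥ w *ᵥ y = 0) :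
    ∃ v : Matrix n n 𝕜, v.IsHermitian ∧ w = a * v + v * a := by
  set φ := Unitary.conjStarAlgAut 𝕜 (Matrix n n 𝕜) ha.eigenvectorUnitary
  set D : Matrix n n 𝕜 := diagonal (RCLike.ofReal ∘ ha.eigenvalues)
  have hker' : ∀ j, ha.eigenvalues j = 0 → a *ᵥ ⇑(ha.eigenvectorBasis j) = 0 := fun j hj => by
    simp [ha.mulVec_eigenvectorBasis, hj]
  obtain ⟨v, hv, hvw⟩ := exists_isHermitian_diagonal_mul_add_mul_diagonal_eq hnr
    (w := φ.symm w) (IsSelfAdjoint.map hw φ.symm) fun i j hi hj => by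
      rw [Unitary.conjStarAlgAut_symm_apply, mul_mul_apply]
      exact hker _ _ (hker' i hi) (hker' j hj)
  refine ⟨φ v, IsSelfAdjoint.map hv φ, ?_⟩
  calc w = φ (φ.symm w) := (φ.apply_symm_apply w).symm
    _ = φ D * φ v + φ v * φ D := by rw [← hvw, map_add, map_mul, map_mul]
    _ = a * φ v + φ v * a := by rw [← ha.spectral_theorem]

end Matrix

theorem range_jordan_mul_eq_general {r : ℕ}
    (a : Matrix (Fin r) (Fin r) ℂ) (ha : a.IsHermitian)
    (hnr : ∀ i j : Fin r, ha.eigenvalues i ≠ 0 → ha.eigenvalues j ≠ 0 →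
      ha.eigenvalues i + ha.eigenvalues j ≠ 0) :
    {w : Matrix (Fin r) (Fin r) ℂ |
        ∃ v : Matrix (Fin r) (Fin r) ℂ, v.IsHermitian ∧ w = a * v + v * a} =
      {w : Matrix (Fin r) (Fin r) ℂ | w.IsHermitian ∧
        ∀ x y : Fin r → ℂ, a.mulVec x = 0 → a.mulVec y = 0 → star x ⬝ᵥ w.mulVec y = 0} := by
  ext w
  constructor
  · rintro ⟨v, hv, rfl⟩
    exact ⟨ha.mul_add_mul hv, fun x y ↦ ha.star_dotProduct_mul_add_mul_mulVec_eq_zero v⟩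
  · rintro ⟨hw, hker⟩
    exact ha.exists_isHermitian_mul_add_mul_eq hnr hw hker

/-- Let `a` be a Hermitian `r × r` complex matrix such that `λ + μ ≠ 0` for any two nonzero
eigenvalues `λ, μ` of `a`. Then the set `{a v + v a : v Hermitian}` equals the set of Hermitian
matrices `w` with `⟨x, w y⟩ = 0` for all `x, y ∈ ℂʳ` in the kernel of `a`. -/
theorem range_jordan_mul_eq {r : ℕ} (hr : 1 ≤ r)
    (a : Matrix (Fin r) (Fin r) ℂ) (ha : a.IsHermitian)
    (hnr : ∀ i j : Fin r, ha.eigenvalues i ≠ 0 → ha.eigenvalues j ≠ 0 →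
      ha.eigenvalues i + ha.eigenvalues j ≠ 0) :
    {w : Matrix (Fin r) (Fin r) ℂ |
        ∃ v : Matrix (Fin r) (Fin r) ℂ, v.IsHermitian ∧ w = a * v + v * a} =
      {w : Matrix (Fin r) (Fin r) ℂ | w.IsHermitian ∧
        ∀ x y : Fin r → ℂ, a.mulVec x = 0 → a.mulVec y = 0 → star x ⬝ᵥ w.mulVec y = 0} :=
  range_jordan_mul_eq_general a ha hnr
end

section
/- Let a and v be Hermitian r×r complex matrices. Then a v z + z v a = 0 for every Hermitian r×r matrix z if and only if a v = 0. -/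
/-!
Put `b = a v`, so that `bᴴ = v a` and the hypothesis reads `b z + z bᴴ = 0` for Hermitian `z`.
Taking `z = 1` gives `bᴴ = -b`, and then `b` commutes with every Hermitian matrix, hence with
every matrix (write `m = ℜ m + i ℑ m`), so `b` is scalar. But `v a = -a v` forces
`tr (a v) = tr (v a) = -tr (a v)`, so the scalar is `0`.
-/

open Matrix ComplexStarModule

theorem commute_of_forall_isSelfAdjoint {A : Type*} [Ring A] [StarRing A] [Module ℂ A]
    [StarModule ℂ A] [IsScalarTower ℂ A A] [SMulCommClass ℂ A A] {b : A}
    (h : ∀ z : A, IsSelfAdjoint z → Commute b z) (m : A) : Commute b m := by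
  rw [← realPart_add_I_smul_imaginaryPart m]
  exact (h _ (ℜ m).2).add_right ((h _ (ℑ m).2).smul_right Complex.I)

section SkewCentral

variable {R : Type*} [Ring R] [StarRing R] {b : R}

theorem star_eq_neg_of_forall_mul_add_mul_star_eq_zero
    (h : ∀ z : R, IsSelfAdjoint z → b * z + z * star b = 0) : star b = -b := by
  simpa [eq_neg_iff_add_eq_zero, add_comm] using h 1 (IsSelfAdjoint.one R)

theorem commute_of_forall_mul_add_mul_star_eq_zero
    (h : ∀ z : R, IsSelfAdjoint z → b * z + z * star b = 0) (z : R) (hz : IsSelfAdjoint z) :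
    Commute b z := by
  have hz' := h z hz
  rwa [star_eq_neg_of_forall_mul_add_mul_star_eq_zero h, mul_neg, ← sub_eq_add_neg,
    sub_eq_zero] at hz'

end SkewCentral

namespace Matrix

variable {n R : Type*} [Fintype n]

theorem trace_mul_eq_zero_of_mul_eq_neg [CommRing R] [NoZeroDivisors R] [CharZero R]
    {a v : Matrix n n R} (h : v * a = -(a * v)) : (a * v).trace = 0 :=
  self_eq_neg.mp (by rw [← trace_neg, ← h, trace_mul_comm])

theorem eq_zero_of_mem_range_scalar_of_trace_eq_zero [DecidableEq n] [Ring R] [NoZeroDivisors R]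
    [CharZero R] {M : Matrix n n R} (hM : M ∈ Set.range (scalar n)) (htr : M.trace = 0) :
    M = 0 := by
  obtain ⟨c, rfl⟩ := hM
  cases isEmpty_or_nonempty n
  · exact Subsingleton.elim _ _
  · simp_all [scalar_apply]

end Matrix

theorem triple_vanish_iff_peirce_zero_general {r : ℕ}
    (a v : Matrix (Fin r) (Fin r) ℂ) (ha : a.IsHermitian) (hv : v.IsHermitian) :
    (∀ z : Matrix (Fin r) (Fin r) ℂ, z.IsHermitian → a * v * z + z * v * a = 0) ↔ a * v = 0 := by
  have hstar : star (a * v) = v * a := by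
    rw [star_eq_conjTranspose, conjTranspose_mul, ha.eq, hv.eq]
  constructor
  · intro h
    have h' : ∀ z, IsSelfAdjoint z → a * v * z + z * star (a * v) = 0 := fun z hz => by
      rw [hstar, ← mul_assoc]
      exact h z (isHermitian_iff_isSelfAdjoint.mpr hz)
    have hcentral : a * v ∈ Set.range (scalar (Fin r)) :=
      mem_range_scalar_of_commute_single fun _ _ _ =>
        (commute_of_forall_isSelfAdjoint (commute_of_forall_mul_add_mul_star_eq_zero h') _).symm
    have hanti : v * a = -(a * v) := hstar ▸ star_eq_neg_of_forall_mul_add_mul_star_eq_zero h'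
    exact eq_zero_of_mem_range_scalar_of_trace_eq_zero hcentral
      (trace_mul_eq_zero_of_mul_eq_neg hanti)
  · intro h z _
    have hva : v * a = 0 := by rw [← hstar, h, star_zero]
    rw [h, mul_assoc, hva, zero_mul, mul_zero, add_zero]

/-- For Hermitian `r × r` complex matrices `a` and `v`, one has `a v z + z v a = 0` for every
Hermitian matrix `z` if and only if `a v = 0`.  (Matrix form of: the Jordan triple products
`{a v z}` vanish for all `z` exactly when `v` lies in the Peirce `0`-space of `a`.) -/
theorem triple_vanish_iff_peirce_zero {r : ℕ} (hr : 1 ≤ r)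
    (a v : Matrix (Fin r) (Fin r) ℂ) (ha : a.IsHermitian) (hv : v.IsHermitian) :
    (∀ z : Matrix (Fin r) (Fin r) ℂ, z.IsHermitian → a * v * z + z * v * a = 0) ↔ a * v = 0 :=
  triple_vanish_iff_peirce_zero_general a v ha hv
end

section
/- For integers p, q ≥ 0 with p + q ≤ r, the set C_{p,q} is a convex subset of Herm(r) if and only if (p, q) is one of (r, 0), (0, r), or (0, 0). -/
/-!
Since the eigenvalues of a real diagonal matrix are its diagonal entries, the real vectors `d`
with `diagonal d ∈ Cpq r p q` are those with `p` positive and `q` negative entries, a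
permutation-invariant set. If `Cpq r p q` is convex, so is this set, and averaging the
permutations of one of its elements gives a constant vector `c`; then `c • 1 ∈ Cpq r p q` forces
`(p, q)` to be `(r, 0)`, `(0, 0)` or `(0, r)` according to the sign of `c`. Conversely, `Cpq r r 0`
is the convex cone of positive definite matrices, `Cpq r 0 r` is its negative and
`Cpq r 0 0 = {0}`.
-/

open Matrix

open Polynomial Finset
open scoped ComplexOrder

namespace Matrix

variable {n 𝕜 : Type*} [RCLike 𝕜]

theorem convex_setOf_posDef : Convex ℝ {A : Matrix n n 𝕜 | A.PosDef} := by
  intro A hA B hB a b ha hb hab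
  rcases ha.eq_or_lt with rfl | ha
  · simpa [show b = 1 by linarith] using hB
  · exact (hA.smul ha).add_posSemidef (hB.posSemidef.smul hb)

variable [Fintype n] [DecidableEq n] {A : Matrix n n 𝕜}

theorem IsHermitian.map_eigenvalues_eq_of_charpoly_eq (hA : A.IsHermitian) {d : n → ℝ}
    (h : A.charpoly = ∏ i, (X - C (d i : 𝕜))) :
    univ.val.map hA.eigenvalues = univ.val.map d := by
  have := congrArg (fun p : 𝕜[X] => p.roots.map RCLike.re) (hA.charpoly_eq.symm.trans h)
  simpa [roots_prod, Finset.prod_ne_zero_iff, X_sub_C_ne_zero, Multiset.map_map] using this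

theorem IsHermitian.charpoly_neg (hA : A.IsHermitian) :
    (-A).charpoly = ∏ i, (X - C (-hA.eigenvalues i : 𝕜)) := by
  conv_lhs => rw [hA.spectral_theorem, Unitary.conjStarAlgAut_apply, ← neg_mul, ← mul_neg,
    charpoly_mul_comm, ← mul_assoc]
  simp [charpoly_diagonal]

end Matrix

theorem Convex.exists_const_mem_of_perm_invariant {n : Type*} [Fintype n] [DecidableEq n]
    {S : Set (n → ℝ)} (hS : Convex ℝ S) (hperm : ∀ v ∈ S, ∀ σ : Equiv.Perm n, v ∘ σ ∈ S)
    {v : n → ℝ} (hv : v ∈ S) : ∃ c : ℝ, (fun _ => c) ∈ S := by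
  set w : n → ℝ := ∑ σ : Equiv.Perm n, (Fintype.card (Equiv.Perm n) : ℝ)⁻¹ • (v ∘ σ)
  have hw : w ∈ S := hS.sum_mem (fun _ _ => by positivity)
    (by simp [Fintype.card_ne_zero]) (fun σ _ => hperm v hv σ)
  have hconst (i j : n) : w i = w j := by
    simp only [w, Finset.sum_apply, Pi.smul_apply, Function.comp_apply]
    rw [← Equiv.sum_comp (Equiv.mulRight (Equiv.swap i j))]
    simp [Equiv.Perm.mul_apply]
  cases isEmpty_or_nonempty n with
  | inl _ => exact ⟨0, by rwa [Subsingleton.elim (fun _ => (0 : ℝ)) w]⟩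
  | inr h =>
    obtain ⟨i⟩ := h
    exact ⟨w i, by convert hw using 1; funext j; exact hconst i j⟩

variable {r p q : ℕ}

theorem mem_Cpq_iff_of_charpoly_eq {x : Matrix (Fin r) (Fin r) ℂ} (hx : x.IsHermitian)
    {d : Fin r → ℝ} (h : x.charpoly = ∏ i, (X - C (d i : ℂ))) :
    x ∈ Cpq r p q ↔ #{i | 0 < d i} = p ∧ #{i | d i < 0} = q := by
  have hcard (P : ℝ → Prop) [DecidablePred P] :
      #{i | P (hx.eigenvalues i)} = #{i | P (d i)} := by
    have := congrArg (Multiset.countP P) (hx.map_eigenvalues_eq_of_charpoly_eq h)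
    rwa [Multiset.countP_map, Multiset.countP_map] at this
  rw [← hcard (0 < ·), ← hcard (· < 0)]
  exact ⟨fun ⟨_, h⟩ => h, fun h => ⟨hx, h⟩⟩

theorem diagonal_ofReal_mem_Cpq_iff (d : Fin r → ℝ) :
    diagonal (fun i => (d i : ℂ)) ∈ Cpq r p q ↔ #{i | 0 < d i} = p ∧ #{i | d i < 0} = q :=
  mem_Cpq_iff_of_charpoly_eq (isHermitian_diagonal_of_self_adjoint _ (by ext; simp))
    (charpoly_diagonal _)

theorem diagonal_ofReal_comp_perm_mem_Cpq_iff (d : Fin r → ℝ) (σ : Equiv.Perm (Fin r)) :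
    diagonal (fun i => (d (σ i) : ℂ)) ∈ Cpq r p q ↔ diagonal (fun i => (d i : ℂ)) ∈ Cpq r p q := by
  have hcard (P : ℝ → Prop) [DecidablePred P] : #{i | P (d (σ i))} = #{i | P (d i)} :=
    card_equiv σ (by simp)
  simp only [diagonal_ofReal_mem_Cpq_iff, hcard (0 < ·), hcard (· < 0)]

theorem exists_card_pos_card_neg (hpq : p + q ≤ r) :
    ∃ d : Fin r → ℝ, #{i | 0 < d i} = p ∧ #{i | d i < 0} = q := by
  have hlt (m : ℕ) (hm : m ≤ r) : #{i : Fin r | (i : ℕ) < m} = m := by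
    simp [Fin.card_filter_val_lt, hm]
  have hsub : filter (fun i : Fin r => (i : ℕ) < p) univ ⊆
      filter (fun i : Fin r => (i : ℕ) < p + q) univ := by
    intro i; simp only [mem_filter, mem_univ, true_and]; omega
  refine ⟨fun i => if (i : ℕ) < p then 1 else if (i : ℕ) < p + q then -1 else 0, ?_, ?_⟩
  · calc _ = #{i : Fin r | (i : ℕ) < p} := by
          congr 1; ext i; simp only [mem_filter, mem_univ, true_and]
          split_ifs <;> norm_num <;> omega
      _ = p := hlt p (by omega)
  · calc _ = #(filter (fun i : Fin r => (i : ℕ) < p + q) univ \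
          filter (fun i : Fin r => (i : ℕ) < p) univ) := by
          congr 1; ext i; simp only [mem_filter, mem_sdiff, mem_univ, true_and]
          split_ifs <;> norm_num <;> omega
      _ = q := by rw [card_sdiff_of_subset hsub, hlt _ hpq, hlt p (by omega)]; omega

theorem Convex.exists_ofReal_diagonal_mem_Cpq (hconv : Convex ℝ (Cpq r p q)) (hpq : p + q ≤ r) :
    ∃ c : ℝ, diagonal (fun _ => (c : ℂ)) ∈ Cpq r p q := by
  let D : (Fin r → ℝ) →ₗ[ℝ] Matrix (Fin r) (Fin r) ℂ :=
    (diagonalLinearMap (Fin r) ℝ ℂ).comp (Complex.ofRealCLM.toLinearMap.compLeft (Fin r))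
  obtain ⟨d, hd⟩ := exists_card_pos_card_neg hpq
  exact (hconv.linear_preimage D).exists_const_mem_of_perm_invariant
    (fun v hv σ => (diagonal_ofReal_comp_perm_mem_Cpq_iff v σ).mpr hv)
    ((diagonal_ofReal_mem_Cpq_iff d).mpr hd)

theorem neg_mem_Cpq_of_mem {x : Matrix (Fin r) (Fin r) ℂ} (hx : x ∈ Cpq r p q) :
    -x ∈ Cpq r q p := by
  obtain ⟨hx, hpos, hneg⟩ := hx
  rw [mem_Cpq_iff_of_charpoly_eq hx.neg (d := -hx.eigenvalues) (by simpa using hx.charpoly_neg)]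
  simpa using ⟨hneg, hpos⟩

theorem neg_Cpq : -Cpq r p q = Cpq r q p := by
  ext x
  refine ⟨fun hx => ?_, neg_mem_Cpq_of_mem⟩
  simpa using neg_mem_Cpq_of_mem hx

theorem Cpq_self_zero : Cpq r r 0 = {x | x.PosDef} := by
  ext x
  constructor
  · rintro ⟨hx, hpos, -⟩
    refine hx.posDef_iff_eigenvalues_pos.mpr fun i => ?_
    simpa using card_filter_eq_iff.mp (hpos.trans (card_fin r).symm) i
  · intro hx
    refine ⟨hx.isHermitian, ?_, ?_⟩ <;> simp [hx.eigenvalues_pos, (hx.eigenvalues_pos _).le]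

theorem Cpq_zero_zero : Cpq r 0 0 = {0} := by
  ext x
  constructor
  · rintro ⟨hx, hpos, hneg⟩
    rw [Set.mem_singleton_iff, ← hx.eigenvalues_eq_zero_iff]
    simp only [card_eq_zero, filter_eq_empty_iff, not_lt] at hpos hneg
    exact funext fun i => le_antisymm (hpos (mem_univ i)) (hneg (mem_univ i))
  · rintro rfl
    simpa using (diagonal_ofReal_mem_Cpq_iff (r := r) (p := 0) (q := 0) 0).mpr (by simp)

theorem convex_Cpq_iff_general {r : ℕ} (p q : ℕ) (hpq : p + q ≤ r) :
    Convex ℝ (Cpq r p q) ↔ (p = r ∧ q = 0) ∨ (p = 0 ∧ q = r) ∨ (p = 0 ∧ q = 0) := by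
  constructor
  · intro hconv
    obtain ⟨c, hc⟩ := hconv.exists_ofReal_diagonal_mem_Cpq hpq
    obtain ⟨hcpos, hcneg⟩ := (diagonal_ofReal_mem_Cpq_iff fun _ => c).mp hc
    rcases lt_trichotomy c 0 with hc0 | rfl | hc0
    · simp [hc0, hc0.not_gt] at hcpos hcneg; omega
    · simp at hcpos hcneg; omega
    · simp [hc0, hc0.not_gt] at hcpos hcneg; omega
  · rintro (⟨rfl, rfl⟩ | ⟨rfl, rfl⟩ | ⟨rfl, rfl⟩)
    · rw [Cpq_self_zero]
      exact convex_setOf_posDef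
    · rw [← neg_Cpq, Cpq_self_zero]
      exact convex_setOf_posDef.neg
    · rw [Cpq_zero_zero]
      exact convex_singleton 0

/-- `C_{p,q}` is a convex subset of the real vector space of Hermitian `r × r` matrices
if and only if `(p, q)` is `(r, 0)`, `(0, r)` or `(0, 0)`. -/
theorem convex_Cpq_iff {r : ℕ} (hr : 1 ≤ r) (p q : ℕ) (hpq : p + q ≤ r) :
    Convex ℝ (Cpq r p q) ↔ (p = r ∧ q = 0) ∨ (p = 0 ∧ q = r) ∨ (p = 0 ∧ q = 0) :=
  convex_Cpq_iff_general p q hpq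
end

section
/- If p ≥ 1, q ≥ 1 and p + q = r, then the convex hull of C_{p,q} is the whole real vector space Herm(r) of Hermitian r×r complex matrices. -/
/-!
Write `x = U diag(λ) U*`. Let `s` have `p` entries equal to `q` and `q` entries equal to `-p`, so
that `∑ s = 0`, and let `s_k = s(· - k)` be its translates under the cyclic group `Fin r`. For
`t > ‖λ‖` every `λ + t s_k` has exactly `p` positive and `q` negative entries, and the average of
these vectors is `λ`. The map `d ↦ U diag(d) U*` is `ℝ`-linear and does not change eigenvalues, so
it writes `x` as the average of `r` elements of `C_{p,q}`.
-/

open Matrix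

open Finset Unitary Polynomial

def Dpq (n : Type*) [Fintype n] (p q : ℕ) : Set (n → ℝ) :=
  {d | #{i | 0 < d i} = p ∧ #{i | d i < 0} = q}

section RealVectors

variable {n : Type*} [Fintype n] {p q : ℕ}

theorem comp_equiv_mem_Dpq {s : n → ℝ} (hs : s ∈ Dpq n p q) (e : n ≃ n) :
    s ∘ e ∈ Dpq n p q := by
  obtain ⟨hpos, hneg⟩ := hs
  exact ⟨hpos ▸ card_equiv e (by simp), hneg ▸ card_equiv e (by simp)⟩

theorem pos_add_iff_of_abs_lt {a c : ℝ} (h : |a| < |c|) : 0 < a + c ↔ 0 < c := by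
  constructor <;> intro h' <;> cases abs_cases a <;> cases abs_cases c <;> linarith

theorem add_neg_iff_of_abs_lt {a c : ℝ} (h : |a| < |c|) : a + c < 0 ↔ c < 0 := by
  constructor <;> intro h' <;> cases abs_cases a <;> cases abs_cases c <;> linarith

theorem add_smul_mem_Dpq {s : n → ℝ} (hs : s ∈ Dpq n p q) (hs1 : ∀ i, 1 ≤ |s i|)
    (l : n → ℝ) {t : ℝ} (ht : ‖l‖ < t) : l + t • s ∈ Dpq n p q := by
  have ht₀ : 0 < t := (norm_nonneg l).trans_lt ht
  have hlt : ∀ i, |l i| < |t * s i| := fun i => calc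
    |l i| ≤ ‖l‖ := by simpa using norm_le_pi_norm l i
    _ < t := ht
    _ ≤ |t * s i| := by
      rw [abs_mul, abs_of_pos ht₀]
      exact le_mul_of_one_le_right ht₀.le (hs1 i)
  have hpos : ∀ i, 0 < l i + t * s i ↔ 0 < s i := fun i => by
    rw [pos_add_iff_of_abs_lt (hlt i), mul_pos_iff_of_pos_left ht₀]
  have hneg : ∀ i, l i + t * s i < 0 ↔ s i < 0 := fun i => by
    rw [add_neg_iff_of_abs_lt (hlt i), ← smul_eq_mul, smul_neg_iff_of_pos_left ht₀]
  simpa only [Dpq, Set.mem_ofPred_eq, Pi.add_apply, Pi.smul_apply, smul_eq_mul, hpos, hneg]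
    using hs

theorem exists_mem_Dpq_sum_eq_zero (hp : 1 ≤ p) (hq : 1 ≤ q) (hcard : Fintype.card n = p + q) :
    ∃ s ∈ Dpq n p q, (∀ i, 1 ≤ |s i|) ∧ ∑ i, s i = 0 := by
  classical
  obtain ⟨A, -, hA⟩ := exists_subset_card_eq (s := (univ : Finset n)) (n := p) (by simp [hcard])
  have hAc : #{i | i ∉ A} = q := by
    rw [filter_not, filter_mem_eq_inter, univ_inter, ← compl_eq_univ_sdiff, card_compl, hA,
      hcard, Nat.add_sub_cancel_left]
  have hq₀ : (0 : ℝ) < q := by exact_mod_cast hq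
  have hp₀ : (0 : ℝ) < p := by exact_mod_cast hp
  refine ⟨fun i => if i ∈ A then q else -p, ⟨?_, ?_⟩, fun i => ?_, ?_⟩
  · convert hA using 2
    ext i
    by_cases h : i ∈ A <;> simp [h, hq₀, hp₀.le]
  · convert hAc using 2
    ext i
    by_cases h : i ∈ A <;> simp [h, hq₀.le, hp₀]
  · dsimp only
    split_ifs <;> simp <;> assumption_mod_cast
  · rw [sum_ite, sum_const, sum_const, filter_mem_eq_inter, univ_inter, hA, hAc]
    simp only [nsmul_eq_mul]
    ring

theorem mem_convexHull_range_add_of_sum_eq_zero {ι E : Type*} [Fintype ι] [Nonempty ι]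
    [AddCommGroup E] [Module ℝ E] (x : E) {w : ι → E} (hw : ∑ k, w k = 0) :
    x ∈ convexHull ℝ (Set.range fun k => x + w k) := by
  have hι : (0 : ℝ) < Fintype.card ι := by exact_mod_cast Fintype.card_pos
  have hx : ∑ k, (Fintype.card ι : ℝ)⁻¹ • (x + w k) = x := by
    rw [← smul_sum, sum_add_distrib, hw, add_zero, sum_const, card_univ,
      ← Nat.cast_smul_eq_nsmul ℝ, smul_smul, inv_mul_cancel₀ hι.ne', one_smul]
  have := (convex_convexHull ℝ _).sum_mem (t := univ) (w := fun _ => (Fintype.card ι : ℝ)⁻¹)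
    (fun _ _ => by positivity) (by simp [hι.ne'])
    fun k _ => subset_convexHull ℝ (Set.range fun k => x + w k) ⟨k, rfl⟩
  rwa [hx] at this

theorem convexHull_Dpq {G : Type*} [AddCommGroup G] [Fintype G] (hp : 1 ≤ p) (hq : 1 ≤ q)
    (hcard : Fintype.card G = p + q) : convexHull ℝ (Dpq G p q) = Set.univ := by
  obtain ⟨s, hs, hs1, hsum⟩ := exists_mem_Dpq_sum_eq_zero hp hq hcard
  refine Set.eq_univ_of_forall fun l => ?_
  have htranslates : ∑ k : G, (‖l‖ + 1) • (s ∘ Equiv.subRight k) = 0 := by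
    ext i
    have hshift : ∑ k, s (i - k) = ∑ j, s j :=
      Fintype.sum_equiv (Equiv.subLeft i) _ s fun _ => rfl
    simp [← mul_sum, hshift, hsum]
  refine convexHull_mono ?_ (mem_convexHull_range_add_of_sum_eq_zero l htranslates)
  rintro _ ⟨k, rfl⟩
  exact add_smul_mem_Dpq (comp_equiv_mem_Dpq hs _) (fun i => hs1 _) l (lt_add_one _)

end RealVectors

section UnitaryConjDiagonal

variable {𝕜 n : Type*} [RCLike 𝕜] [Fintype n] [DecidableEq n]

noncomputable def unitaryConjDiagonal (U : unitary (Matrix n n 𝕜)) :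
    (n → ℝ) →ₗ[ℝ] Matrix n n 𝕜 :=
  (conjStarAlgAut ℝ _ U).toAlgEquiv.toLinearMap ∘ₗ diagonalLinearMap n ℝ 𝕜 ∘ₗ
    (RCLike.ofRealAm (K := 𝕜)).toLinearMap.compLeft n

theorem unitaryConjDiagonal_apply (U : unitary (Matrix n n 𝕜)) (d : n → ℝ) :
    unitaryConjDiagonal U d = conjStarAlgAut 𝕜 _ U (diagonal (RCLike.ofReal ∘ d)) := rfl

theorem Matrix.IsHermitian.unitaryConjDiagonal_eigenvalues {A : Matrix n n 𝕜}
    (hA : A.IsHermitian) : unitaryConjDiagonal hA.eigenvectorUnitary hA.eigenvalues = A :=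
  hA.spectral_theorem.symm

theorem isHermitian_unitaryConjDiagonal (U : unitary (Matrix n n 𝕜)) (d : n → ℝ) :
    (unitaryConjDiagonal U d).IsHermitian :=
  ((isHermitian_diagonal_iff.2 fun i => RCLike.conj_ofReal (d i)).isSelfAdjoint.map
    (conjStarAlgAut 𝕜 _ U)).isHermitian

theorem charpoly_unitaryConjDiagonal (U : unitary (Matrix n n 𝕜)) (d : n → ℝ) :
    (unitaryConjDiagonal U d).charpoly = ∏ i, (X - C (d i : 𝕜)) := by
  rw [unitaryConjDiagonal_apply, conjStarAlgAut_apply, charpoly_mul_comm, ← mul_assoc]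
  simp [charpoly_diagonal]

theorem map_eigenvalues_unitaryConjDiagonal (U : unitary (Matrix n n 𝕜)) (d : n → ℝ) :
    univ.val.map (isHermitian_unitaryConjDiagonal U d).eigenvalues = univ.val.map d := by
  have h := (isHermitian_unitaryConjDiagonal U d).roots_charpoly_eq_eigenvalues
  rw [charpoly_unitaryConjDiagonal,
    roots_prod _ _ (prod_ne_zero_iff.2 fun i _ => X_sub_C_ne_zero _)] at h
  simp only [roots_X_sub_C, Multiset.bind_singleton] at h
  refine Multiset.map_injective (RCLike.ofReal_injective (K := 𝕜)) ?_
  rw [Multiset.map_map, Multiset.map_map, ← h]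
  rfl

theorem card_filter_eigenvalues_unitaryConjDiagonal (U : unitary (Matrix n n 𝕜)) (d : n → ℝ)
    (P : ℝ → Prop) [DecidablePred P] :
    #{i | P ((isHermitian_unitaryConjDiagonal U d).eigenvalues i)} = #{i | P (d i)} := by
  have h := congrArg (fun s => Multiset.card (s.filter P))
    (map_eigenvalues_unitaryConjDiagonal U d)
  simp only [Multiset.filter_map, Multiset.card_map] at h
  exact h

end UnitaryConjDiagonal

theorem unitaryConjDiagonal_mem_Cpq {r p q : ℕ} (U : unitary (Matrix (Fin r) (Fin r) ℂ))
    {d : Fin r → ℝ} (hd : d ∈ Dpq (Fin r) p q) : unitaryConjDiagonal U d ∈ Cpq r p q :=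
  ⟨isHermitian_unitaryConjDiagonal U d,
    (card_filter_eigenvalues_unitaryConjDiagonal U d _).trans hd.1,
    (card_filter_eigenvalues_unitaryConjDiagonal U d (· < 0)).trans hd.2⟩

/-- If `p ≥ 1`, `q ≥ 1` and `p + q = r`, the convex hull (over `ℝ`) of `C_{p,q}` is the whole
real vector space of Hermitian `r × r` complex matrices. -/
theorem convexHull_Cpq {r : ℕ} (p q : ℕ) (hp : 1 ≤ p) (hq : 1 ≤ q) (hpq : p + q = r) :
    convexHull ℝ (Cpq r p q) = {x : Matrix (Fin r) (Fin r) ℂ | x.IsHermitian} := by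
  have : NeZero r := ⟨by omega⟩
  refine (convexHull_min (fun x hx => hx.1) (selfAdjoint.submodule ℝ _).convex).antisymm
    fun x (hx : x.IsHermitian) => ?_
  have hx' :
      x ∈ unitaryConjDiagonal hx.eigenvectorUnitary '' convexHull ℝ (Dpq (Fin r) p q) := by
    rw [convexHull_Dpq hp hq (by simp [hpq]), Set.image_univ]
    exact ⟨_, hx.unitaryConjDiagonal_eigenvalues⟩
  rw [LinearMap.image_convexHull] at hx'
  refine convexHull_mono ?_ hx'
  rintro _ ⟨d, hd, rfl⟩
  exact unitaryConjDiagonal_mem_Cpq _ hd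
end

section
/- Let m ≥ 3 and let Ω = {x ∈ ℝ^m : x₁ > √(x₂² + ⋯ + x_m²)} be the open future light cone. A linear automorphism g ∈ GL(m, ℝ) satisfies g(Ω) = Ω if and only if g = t·L for some real number t > 0 and some matrix L ∈ GL(m, ℝ) with Lᵀ η L = η and L₁₁ > 0, where η = diag(1, −1, …, −1); that is, the group of linear automorphisms of Ω is the group of positive scalar multiples of orthochronous Lorentz transformations. -/
open Matrix

/-- The open future light cone in `ℝᵐ`: the set of `x` with `x₁ > √(x₂² + ⋯ + x_m²)`. -/
def futureCone (m : ℕ) [NeZero m] : Set (Fin m → ℝ) :=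
  {x | Real.sqrt (∑ i ∈ Finset.univ.erase 0, x i ^ 2) < x 0}

/-- The Lorentz form matrix `η = diag(1, −1, …, −1)`. -/
def lorentzEta (m : ℕ) [NeZero m] : Matrix (Fin m) (Fin m) ℝ :=
  Matrix.diagonal fun i => if i = 0 then 1 else -1

/-!
A continuous injective map `g` with `g(Ω) = Ω` sends the boundary of the open cone `Ω` into itself,
so a linear automorphism of `Ω` preserves the null cone of the Lorentz form `q(x) = xᵀ η x`. A
symmetric quadratic form vanishing on the null cone is a multiple of `q`, as one sees by testing it on
a few explicit null vectors; hence `gᵀ η g = c η` with `c = q(g e₀) > 0`, and `g / √c` is an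
orthochronous Lorentz transformation. Conversely, a Lorentz transformation `L` with `L₀₀ > 0` preserves
`q` and sends `e₀` into `Ω`, so the reversed Cauchy–Schwarz inequality for timelike vectors shows that
it maps `Ω` into itself; the same applies to its inverse `η Lᵀ η`.
-/

theorem Set.mapsTo_frontier_of_image_eq {X : Type*} [TopologicalSpace X] {f : X → X}
    {s : Set X} (hs : IsOpen s) (hf : Continuous f) (hinj : Function.Injective f)
    (h : f '' s = s) : Set.MapsTo f (frontier s) (frontier s) := by
  intro x hx
  rw [hs.frontier_eq] at hx ⊢
  refine ⟨h ▸ hf.continuousWithinAt.mem_closure_image hx.1, fun hfx => hx.2 ?_⟩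
  obtain ⟨y, hy, hyx⟩ := h.symm ▸ hfx
  exact hinj hyx ▸ hy

namespace LorentzCone

variable {m : ℕ} [NeZero m]

noncomputable def spatialNorm (x : Fin m → ℝ) : ℝ :=
  √(∑ i ∈ Finset.univ.erase 0, x i ^ 2)

def lorentzInner (x y : Fin m → ℝ) : ℝ := x ⬝ᵥ (lorentzEta m *ᵥ y)

lemma spatialNorm_nonneg (x : Fin m → ℝ) : 0 ≤ spatialNorm x := Real.sqrt_nonneg _

lemma sq_spatialNorm (x : Fin m → ℝ) :
    spatialNorm x ^ 2 = ∑ i ∈ Finset.univ.erase 0, x i ^ 2 :=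
  Real.sq_sqrt (Finset.sum_nonneg fun _ _ => sq_nonneg _)

lemma continuous_spatialNorm : Continuous (spatialNorm : (Fin m → ℝ) → ℝ) := by
  unfold spatialNorm
  fun_prop

lemma futureCone_eq : futureCone m = {x | spatialNorm x < x 0} := rfl

lemma isOpen_futureCone : IsOpen (futureCone m) :=
  isOpen_lt continuous_spatialNorm (continuous_apply 0)

lemma lorentzInner_eq (x y : Fin m → ℝ) :
    lorentzInner x y = x 0 * y 0 - ∑ i ∈ Finset.univ.erase 0, x i * y i := by
  rw [lorentzInner, dotProduct, ← Finset.add_sum_erase _ _ (Finset.mem_univ 0), sub_eq_add_neg,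
    ← Finset.sum_neg_distrib]
  congr 1
  · simp [lorentzEta, mulVec_diagonal]
  · refine Finset.sum_congr rfl fun i hi => ?_
    simp [lorentzEta, mulVec_diagonal, Finset.ne_of_mem_erase hi]

lemma lorentzInner_self (x : Fin m → ℝ) : lorentzInner x x = x 0 ^ 2 - spatialNorm x ^ 2 := by
  rw [lorentzInner_eq, sq_spatialNorm]
  simp only [sq]

lemma lorentzInner_neg_neg (x y : Fin m → ℝ) : lorentzInner (-x) (-y) = lorentzInner x y := by
  simp [lorentzInner, mulVec_neg]

lemma lorentzInner_smul_smul (t : ℝ) (x : Fin m → ℝ) :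
    lorentzInner (t • x) (t • x) = t ^ 2 * lorentzInner x x := by
  simp only [lorentzInner, mulVec_smul, smul_dotProduct, dotProduct_smul, smul_eq_mul]
  ring

lemma lorentzInner_single_zero (x : Fin m → ℝ) : lorentzInner x (Pi.single 0 1) = x 0 := by
  rw [lorentzInner_eq, Finset.sum_eq_zero fun i hi => by
    rw [Pi.single_eq_of_ne (Finset.ne_of_mem_erase hi), mul_zero]]
  simp

lemma lorentzInner_le (x y : Fin m → ℝ) :
    lorentzInner x y ≤ x 0 * y 0 + spatialNorm x * spatialNorm y := by
  have hCS := Real.sum_mul_le_sqrt_mul_sqrt (Finset.univ.erase 0) (-x) y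
  simp only [Pi.neg_apply, neg_mul, Finset.sum_neg_distrib, neg_sq] at hCS
  rw [lorentzInner_eq]
  exact (sub_eq_add_neg _ _).trans_le (add_le_add_right hCS _)

lemma mem_futureCone_iff (x : Fin m → ℝ) :
    x ∈ futureCone m ↔ 0 < x 0 ∧ 0 < lorentzInner x x := by
  rw [futureCone_eq, Set.mem_ofPred_eq, lorentzInner_self]
  have := spatialNorm_nonneg x
  constructor
  · intro h
    constructor <;> nlinarith
  · rintro ⟨h0, h⟩
    exact lt_of_pow_lt_pow_left₀ 2 h0.le (by linarith)

lemma single_zero_mem_futureCone : (Pi.single 0 1 : Fin m → ℝ) ∈ futureCone m := by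
  simp [mem_futureCone_iff, lorentzInner_single_zero]

lemma smul_mem_futureCone {t : ℝ} (ht : 0 < t) {x : Fin m → ℝ} (hx : x ∈ futureCone m) :
    t • x ∈ futureCone m := by
  rw [mem_futureCone_iff] at hx ⊢
  rw [lorentzInner_smul_smul, Pi.smul_apply, smul_eq_mul]
  exact ⟨mul_pos ht hx.1, mul_pos (pow_pos ht 2) hx.2⟩

/-- Reversed Cauchy–Schwarz: a past timelike vector pairs negatively with a future one. -/
lemma mem_futureCone_of_lorentzInner_pos {x y : Fin m → ℝ} (hy : y ∈ futureCone m)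
    (hx : 0 < lorentzInner x x) (hxy : 0 < lorentzInner x y) : x ∈ futureCone m := by
  refine (mem_futureCone_iff x).2 ⟨?_, hx⟩
  by_contra! hx0
  have hy' : spatialNorm y < y 0 := hy
  have hSx := spatialNorm_nonneg x
  have hSy := spatialNorm_nonneg y
  rw [lorentzInner_self] at hx
  have hpast : x 0 < -spatialNorm x := by nlinarith
  nlinarith [lorentzInner_le x y, mul_pos (by linarith : 0 < -spatialNorm x - x 0)
    (by linarith : 0 < y 0), mul_nonneg hSx (by linarith : 0 ≤ y 0 - spatialNorm y)]

lemma lorentzEta_transpose : (lorentzEta m)ᵀ = lorentzEta m := diagonal_transpose _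

lemma lorentzEta_mul_lorentzEta : lorentzEta m * lorentzEta m = 1 := by
  rw [lorentzEta, diagonal_mul_diagonal, ← diagonal_one]
  congr 1
  funext i
  split_ifs <;> norm_num

lemma lorentzEta_mul_lorentzEta_mul (A : Matrix (Fin m) (Fin m) ℝ) :
    lorentzEta m * (lorentzEta m * A) = A := by
  rw [← Matrix.mul_assoc, lorentzEta_mul_lorentzEta, Matrix.one_mul]

lemma lorentzInner_mulVec_mulVec (A : Matrix (Fin m) (Fin m) ℝ) (x y : Fin m → ℝ) :
    lorentzInner (A *ᵥ x) (A *ᵥ y) = x ⬝ᵥ ((Aᵀ * lorentzEta m * A) *ᵥ y) := by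
  rw [lorentzInner, ← mulVec_mulVec, ← mulVec_mulVec, dotProduct_mulVec x Aᵀ, vecMul_transpose]

def IsLorentz (L : Matrix (Fin m) (Fin m) ℝ) : Prop :=
  Lᵀ * lorentzEta m * L = lorentzEta m

namespace IsLorentz

variable {L : Matrix (Fin m) (Fin m) ℝ} (hL : IsLorentz L)
include hL

lemma lorentzInner_mulVec (x y : Fin m → ℝ) :
    lorentzInner (L *ᵥ x) (L *ᵥ y) = lorentzInner x y := by
  rw [lorentzInner_mulVec_mulVec, hL, lorentzInner]

lemma mul_lorentzEta_mul_transpose_mul_lorentzEta : L * (lorentzEta m * Lᵀ * lorentzEta m) = 1 :=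
  mul_eq_one_comm.mp <| by
    rw [Matrix.mul_assoc, Matrix.mul_assoc, ← Matrix.mul_assoc Lᵀ, hL, lorentzEta_mul_lorentzEta]

lemma mul_lorentzEta_mul_transpose : L * lorentzEta m * Lᵀ = lorentzEta m := by
  have h := congrArg (· * lorentzEta m) hL.mul_lorentzEta_mul_transpose_mul_lorentzEta
  simpa only [Matrix.mul_assoc, lorentzEta_mul_lorentzEta, Matrix.mul_one, Matrix.one_mul] using h

lemma lorentzEta_mul_transpose_mul_lorentzEta :
    IsLorentz (lorentzEta m * Lᵀ * lorentzEta m) := by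
  simp only [IsLorentz, transpose_mul, transpose_transpose, lorentzEta_transpose, Matrix.mul_assoc,
    lorentzEta_mul_lorentzEta_mul]
  rw [← Matrix.mul_assoc L, ← Matrix.mul_assoc (L * _), hL.mul_lorentzEta_mul_transpose,
    lorentzEta_mul_lorentzEta, Matrix.mul_one]

/-- `L e₀` lies in the cone and `⟪L x, L e₀⟫ = x₀`, so reversed Cauchy–Schwarz applies. -/
lemma mulVec_mem_futureCone (hL₀₀ : 0 < L 0 0) {x : Fin m → ℝ} (hx : x ∈ futureCone m) :
    L *ᵥ x ∈ futureCone m := by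
  have he₀ : L *ᵥ Pi.single 0 1 ∈ futureCone m := by
    rw [mem_futureCone_iff, hL.lorentzInner_mulVec, lorentzInner_single_zero]
    simpa [mulVec_single] using hL₀₀
  rw [mem_futureCone_iff] at hx
  refine mem_futureCone_of_lorentzInner_pos he₀ ?_ ?_
  · rw [hL.lorentzInner_mulVec]; exact hx.2
  · rw [hL.lorentzInner_mulVec, lorentzInner_single_zero]; exact hx.1

end IsLorentz

lemma image_smul_mulVec_futureCone {L : Matrix (Fin m) (Fin m) ℝ} (hL : IsLorentz L)
    (hL₀₀ : 0 < L 0 0) {t : ℝ} (ht : 0 < t) :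
    (t • L).mulVec '' futureCone m = futureCone m := by
  set L' := lorentzEta m * Lᵀ * lorentzEta m
  have hL'₀₀ : 0 < L' 0 0 := by simpa [L', lorentzEta, mul_diagonal, diagonal_mul] using hL₀₀
  refine subset_antisymm ?_ fun y hy => ⟨t⁻¹ • (L' *ᵥ y), ?_, ?_⟩
  · rintro _ ⟨x, hx, rfl⟩
    rw [smul_mulVec]
    exact smul_mem_futureCone ht (hL.mulVec_mem_futureCone hL₀₀ hx)
  · exact smul_mem_futureCone (inv_pos.2 ht)
      (hL.lorentzEta_mul_transpose_mul_lorentzEta.mulVec_mem_futureCone hL'₀₀ hy)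
  · rw [smul_mulVec, mulVec_smul, smul_smul, mul_inv_cancel₀ ht.ne', one_smul, mulVec_mulVec,
      hL.mul_lorentzEta_mul_transpose_mul_lorentzEta, one_mulVec]

lemma mem_closure_futureCone {x : Fin m → ℝ} (hx : spatialNorm x ≤ x 0) :
    x ∈ closure (futureCone m) := by
  have hlim : Filter.Tendsto (fun ε : ℝ => x + ε • Pi.single 0 1) (nhdsWithin 0 (Set.Ioi 0))
      (nhds x) :=
    (Continuous.tendsto' (by fun_prop) 0 x (by simp)).mono_left nhdsWithin_le_nhds
  refine mem_closure_of_tendsto hlim (eventually_nhdsWithin_of_forall fun ε (hε : 0 < ε) => ?_)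
  have hspatial : spatialNorm (x + ε • Pi.single 0 1) = spatialNorm x := by
    unfold spatialNorm
    congr 1
    refine Finset.sum_congr rfl fun i hi => ?_
    simp [Pi.single_eq_of_ne (Finset.ne_of_mem_erase hi)]
  change spatialNorm _ < _
  rw [hspatial]
  simpa using hx.trans_lt (lt_add_of_pos_right _ hε)

lemma frontier_futureCone : frontier (futureCone m) = {x | spatialNorm x = x 0} := by
  refine subset_antisymm (frontier_lt_subset_eq continuous_spatialNorm (continuous_apply 0))
    fun x (hx : spatialNorm x = x 0) => ?_
  rw [isOpen_futureCone.frontier_eq]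
  exact ⟨mem_closure_futureCone hx.le, fun h => h.ne hx⟩

lemma lorentzInner_self_eq_zero_of_mem_frontier {x : Fin m → ℝ}
    (hx : x ∈ frontier (futureCone m)) : lorentzInner x x = 0 := by
  rw [frontier_futureCone] at hx
  rw [lorentzInner_self, ← hx.out, sub_self]

lemma mem_frontier_of_lorentzInner_self_eq_zero {x : Fin m → ℝ} (hx : lorentzInner x x = 0)
    (hx₀ : 0 ≤ x 0) : x ∈ frontier (futureCone m) := by
  rw [lorentzInner_self, sub_eq_zero] at hx
  rw [frontier_futureCone]
  exact (pow_left_inj₀ (spatialNorm_nonneg x) hx₀ two_ne_zero).1 hx.symm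

lemma lorentzInner_mulVec_self_eq_zero {g : Matrix (Fin m) (Fin m) ℝ} (hg : IsUnit g)
    (hΩ : g.mulVec '' futureCone m = futureCone m) {x : Fin m → ℝ} (hx : lorentzInner x x = 0) :
    lorentzInner (g *ᵥ x) (g *ᵥ x) = 0 := by
  have hmaps := Set.mapsTo_frontier_of_image_eq isOpen_futureCone
    (Continuous.matrix_mulVec continuous_const continuous_id : Continuous g.mulVec)
    (mulVec_injective_iff_isUnit.2 hg) hΩ
  rcases le_total 0 (x 0) with hx₀ | hx₀
  · exact lorentzInner_self_eq_zero_of_mem_frontier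
      (hmaps (mem_frontier_of_lorentzInner_self_eq_zero hx hx₀))
  · have hneg : lorentzInner (-x) (-x) = 0 := by rwa [lorentzInner_neg_neg]
    have := lorentzInner_self_eq_zero_of_mem_frontier
      (hmaps (mem_frontier_of_lorentzInner_self_eq_zero hneg (by simpa using hx₀)))
    simpa only [mulVec_neg, lorentzInner_neg_neg] using this

omit [NeZero m] in
lemma single_dotProduct_mulVec_single (M : Matrix (Fin m) (Fin m) ℝ) (i j : Fin m) (a b : ℝ) :
    Pi.single i a ⬝ᵥ (M *ᵥ Pi.single j b) = a * M i j * b := by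
  simp [mulVec_single, single_dotProduct, mul_comm]

lemma eq_smul_lorentzEta_of_forall_null {M : Matrix (Fin m) (Fin m) ℝ} (hM : Mᵀ = M)
    (h : ∀ x, lorentzInner x x = 0 → x ⬝ᵥ (M *ᵥ x) = 0) : M = M 0 0 • lorentzEta m := by
  have hsymm (i j : Fin m) : M j i = M i j := congrFun (congrFun hM i) j
  have hrow (j : Fin m) (hj : j ≠ 0) : M 0 j = 0 ∧ M j j = -M 0 0 := by
    have hplus := h (Pi.single 0 1 + Pi.single j 1) (by
      simp [lorentzInner, lorentzEta, mulVec_diagonal, hj, hj.symm])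
    have hminus := h (Pi.single 0 1 + Pi.single j (-1)) (by
      simp [lorentzInner, lorentzEta, mulVec_diagonal, hj, hj.symm])
    simp only [mulVec_add, dotProduct_add, add_dotProduct, single_dotProduct_mulVec_single,
      hsymm 0 j] at hplus hminus
    constructor <;> linarith
  -- `5² = 3² + 4²` gives a null vector with two spatial entries
  have hoff (j k : Fin m) (hj : j ≠ 0) (hk : k ≠ 0) (hjk : j ≠ k) : M j k = 0 := by
    have h534 := h (Pi.single 0 5 + Pi.single j 3 + Pi.single k 4) (by
      simp [lorentzInner, lorentzEta, mulVec_diagonal, hj, hk, hjk, hj.symm, hk.symm, hjk.symm]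
      norm_num)
    simp only [mulVec_add, dotProduct_add, add_dotProduct, single_dotProduct_mulVec_single,
      hsymm 0 j, hsymm 0 k, hsymm j k, (hrow j hj).1, (hrow k hk).1, (hrow j hj).2,
      (hrow k hk).2] at h534
    linarith
  ext i j
  rw [Matrix.smul_apply, smul_eq_mul, lorentzEta, diagonal_apply]
  by_cases hi : i = 0 <;> by_cases hj : j = 0
  · simp [hi, hj]
  · simp [hi, Ne.symm hj, (hrow j hj).1]
  · simpa [hi, hj, hsymm 0 i] using (hrow i hi).1
  · by_cases hij : i = j
    · simp [hij, hj, (hrow j hj).2]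
    · simp [hij, hoff i j hi hj hij]

lemma transpose_mul_lorentzEta_mul_eq_smul {g : Matrix (Fin m) (Fin m) ℝ} (hg : IsUnit g)
    (hΩ : g.mulVec '' futureCone m = futureCone m) :
    gᵀ * lorentzEta m * g =
      lorentzInner (g *ᵥ Pi.single 0 1) (g *ᵥ Pi.single 0 1) • lorentzEta m := by
  have hsymm : (gᵀ * lorentzEta m * g)ᵀ = gᵀ * lorentzEta m * g := by
    rw [transpose_mul, transpose_mul, transpose_transpose, lorentzEta_transpose, Matrix.mul_assoc]
  convert eq_smul_lorentzEta_of_forall_null hsymm fun x hx => ?_ using 2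
  · rw [lorentzInner_mulVec_mulVec, single_dotProduct_mulVec_single, one_mul, mul_one]
  · rw [← lorentzInner_mulVec_mulVec]
    exact lorentzInner_mulVec_self_eq_zero hg hΩ hx

end LorentzCone

open LorentzCone in
theorem lightCone_linear_automorphisms_general {m : ℕ} [NeZero m]
    (g : Matrix (Fin m) (Fin m) ℝ) (hg : IsUnit g) :
    g.mulVec '' futureCone m = futureCone m ↔
      ∃ t : ℝ, 0 < t ∧ ∃ L : Matrix (Fin m) (Fin m) ℝ, IsUnit L ∧
        Lᵀ * lorentzEta m * L = lorentzEta m ∧ 0 < L 0 0 ∧ g = t • L := by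
  refine ⟨fun hΩ => ?_, ?_⟩
  · have hge₀ : g *ᵥ Pi.single 0 1 ∈ futureCone m :=
      hΩ ▸ Set.mem_image_of_mem _ single_zero_mem_futureCone
    obtain ⟨hg₀₀, hc⟩ := (mem_futureCone_iff _).1 hge₀
    set c := lorentzInner (g *ᵥ Pi.single 0 1) (g *ᵥ Pi.single 0 1)
    have ht : 0 < √c := Real.sqrt_pos.2 hc
    refine ⟨√c, ht, (√c)⁻¹ • g, ?_, ?_, ?_, ?_⟩
    · simpa [Units.smul_def] using hg.smul (Units.mk0 (√c)⁻¹ (inv_ne_zero ht.ne'))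
    · rw [transpose_smul, Matrix.smul_mul, Matrix.smul_mul, Matrix.mul_smul,
        transpose_mul_lorentzEta_mul_eq_smul hg hΩ, smul_smul, smul_smul, ← mul_inv,
        Real.mul_self_sqrt hc.le, inv_mul_cancel₀ hc.ne', one_smul]
    · rw [Matrix.smul_apply, smul_eq_mul]
      exact mul_pos (inv_pos.2 ht) (by simpa [mulVec_single] using hg₀₀)
    · rw [smul_smul, mul_inv_cancel₀ ht.ne', one_smul]
  · rintro ⟨t, ht, L, -, hL, hL₀₀, rfl⟩
    exact image_smul_mulVec_futureCone hL hL₀₀ ht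

/-- For `m ≥ 3`, an invertible linear map `g` of `ℝᵐ` maps the open future light cone `Ω` onto
itself if and only if `g = t • L` for some `t > 0` and some `L ∈ GL(m, ℝ)` with `Lᵀ η L = η`
and `L₁₁ > 0`: the linear automorphisms of `Ω` are the positive multiples of orthochronous
Lorentz transformations. -/
theorem lightCone_linear_automorphisms {m : ℕ} [NeZero m] (hm : 3 ≤ m)
    (g : Matrix (Fin m) (Fin m) ℝ) (hg : IsUnit g) :
    g.mulVec '' futureCone m = futureCone m ↔
      ∃ t : ℝ, 0 < t ∧ ∃ L : Matrix (Fin m) (Fin m) ℝ, IsUnit L ∧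
        Lᵀ * lorentzEta m * L = lorentzEta m ∧ 0 < L 0 0 ∧ g = t • L :=
  lightCone_linear_automorphisms_general g hg
end

section
/- Let m ≥ 1 and let D̄ = {z ∈ ℂ^m : (z|z) + √((z|z)² − |⟨z,z⟩|²) ≤ 1} be the closed Lie ball. Then the set of extreme points of the convex set D̄ equals the Shilov boundary S₀ = {z ∈ ℂ^m : (z|z) = 1 and |⟨z,z⟩| = 1}. -/
/-- The closed Lie ball in `ℂᵐ`:
`{z : (z|z) + √((z|z)² − |⟨z,z⟩|²) ≤ 1}`, where `(z|w)` is the standard Hermitian inner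
product and `⟨z,w⟩` the standard symmetric bilinear form. -/
def closedLieBall (m : ℕ) : Set (Fin m → ℂ) :=
  {z | (∑ k, Complex.normSq (z k)) +
      Real.sqrt ((∑ k, Complex.normSq (z k)) ^ 2 - ‖∑ k, z k ^ 2‖ ^ 2) ≤ 1}

/-- The Shilov boundary of the Lie ball: `{z : (z|z) = 1 and |⟨z,z⟩| = 1}`. -/
def lieBallShilov (m : ℕ) : Set (Fin m → ℂ) :=
  {z | (∑ k, Complex.normSq (z k)) = 1 ∧ ‖∑ k, z k ^ 2‖ = 1}

/-!
Write `q = (z|z)`, `p = |⟨z,z⟩| ≤ q` and `N = q + √(q² - p²)`, so that the Lie ball is `N ≤ 1`.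
Since `q ≤ N`, the Lie ball lies in the Euclidean unit ball; a Shilov point lies on the Euclidean
unit sphere, so it is extreme already for the strictly convex Euclidean ball.

Conversely, `N` is continuous, so points with `N < 1` are interior and not extreme. If `N(z) = 1`
but `p < q`, multiply `z` by a unimodular scalar to make `⟨z,z⟩` real. Then `z = x + i y` with
real vectors `x ⊥ y`, `N(z) = (|x| + |y|)²` and `x, y ≠ 0`, so
`z = |x| • (x / |x|) + |y| • (i y / |y|)` is a proper convex combination of two distinct points
of the Lie ball (each with `p = q = 1`). The remaining case `p = q` forces `q = N = 1`.
-/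

namespace LieBall

open Complex Set

variable {m : ℕ}

noncomputable def herm (z : Fin m → ℂ) : ℝ := ∑ k, normSq (z k)

def bil (z : Fin m → ℂ) : ℂ := ∑ k, z k ^ 2

noncomputable def lieNormSq (z : Fin m → ℂ) : ℝ :=
  herm z + √(herm z ^ 2 - ‖bil z‖ ^ 2)

theorem closedLieBall_eq : closedLieBall m = {z | lieNormSq z ≤ 1} := rfl

theorem herm_le_lieNormSq (z : Fin m → ℂ) : herm z ≤ lieNormSq z :=
  le_add_of_nonneg_right (Real.sqrt_nonneg _)

theorem norm_bil_le_herm (z : Fin m → ℂ) : ‖bil z‖ ≤ herm z :=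
  (norm_sum_le _ _).trans_eq <| by simp only [norm_pow, Complex.sq_norm, herm]

theorem continuous_lieNormSq : Continuous (lieNormSq : (Fin m → ℂ) → ℝ) := by
  unfold lieNormSq herm bil
  fun_prop

theorem herm_smul (c : ℂ) (z : Fin m → ℂ) : herm (c • z) = ‖c‖ ^ 2 * herm z := by
  simp only [herm, Finset.mul_sum, Pi.smul_apply, smul_eq_mul, normSq_mul, ← normSq_eq_norm_sq]

theorem bil_smul (c : ℂ) (z : Fin m → ℂ) : bil (c • z) = c ^ 2 * bil z := by
  simp only [bil, Finset.mul_sum, Pi.smul_apply, smul_eq_mul, mul_pow]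

theorem lieNormSq_smul (c : ℂ) (z : Fin m → ℂ) :
    lieNormSq (c • z) = ‖c‖ ^ 2 * lieNormSq z := by
  have hrad : (‖c‖ ^ 2 * herm z) ^ 2 - ‖c ^ 2 * bil z‖ ^ 2
      = (‖c‖ ^ 2) ^ 2 * (herm z ^ 2 - ‖bil z‖ ^ 2) := by
    rw [norm_mul, norm_pow]; ring
  rw [lieNormSq, lieNormSq, herm_smul, bil_smul, hrad, Real.sqrt_mul (by positivity),
    Real.sqrt_sq (by positivity), mul_add]

theorem lieNormSq_ofReal (x : Fin m → ℝ) :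
    lieNormSq (fun k ↦ (x k : ℂ)) = ∑ k, x k ^ 2 := by
  have hherm : herm (fun k ↦ (x k : ℂ)) = ∑ k, x k ^ 2 := by
    simp only [herm, normSq_ofReal, sq]
  have hbil : ‖bil (fun k ↦ (x k : ℂ))‖ = ∑ k, x k ^ 2 := by
    have : bil (fun k ↦ (x k : ℂ)) = ((∑ k, x k ^ 2 : ℝ) : ℂ) := by push_cast [bil]; rfl
    rw [this, norm_real, Real.norm_of_nonneg (by positivity)]
  rw [lieNormSq, hherm, hbil, sub_self, Real.sqrt_zero, add_zero]

theorem herm_eq_sum_re_sq_add_sum_im_sq (z : Fin m → ℂ) :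
    herm z = ∑ k, (z k).re ^ 2 + ∑ k, (z k).im ^ 2 := by
  simp only [herm, normSq_apply, ← Finset.sum_add_distrib, sq]

theorem norm_bil_of_im_eq_zero {z : Fin m → ℂ} (h : (bil z).im = 0) :
    ‖bil z‖ = |∑ k, (z k).re ^ 2 - ∑ k, (z k).im ^ 2| := by
  rw [← abs_re_eq_norm.2 h]
  simp only [bil, re_sum, sq, mul_re, ← Finset.sum_sub_distrib]

theorem lieNormSq_of_im_bil_eq_zero {z : Fin m → ℂ} (h : (bil z).im = 0) :
    lieNormSq z = (√(∑ k, (z k).re ^ 2) + √(∑ k, (z k).im ^ 2)) ^ 2 := by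
  have hR : √(∑ k, (z k).re ^ 2) ^ 2 = ∑ k, (z k).re ^ 2 := Real.sq_sqrt (by positivity)
  have hJ : √(∑ k, (z k).im ^ 2) ^ 2 = ∑ k, (z k).im ^ 2 := Real.sq_sqrt (by positivity)
  have hrad : herm z ^ 2 - ‖bil z‖ ^ 2
      = (2 * √(∑ k, (z k).re ^ 2) * √(∑ k, (z k).im ^ 2)) ^ 2 := by
    rw [herm_eq_sum_re_sq_add_sum_im_sq, norm_bil_of_im_eq_zero h, sq_abs]
    linear_combination (-4 * ∑ k, (z k).im ^ 2) * hR - 4 * √(∑ k, (z k).re ^ 2) ^ 2 * hJ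
  rw [lieNormSq, hrad, Real.sqrt_sq (by positivity), herm_eq_sum_re_sq_add_sum_im_sq]
  linear_combination -hR - hJ

theorem notMem_extremePoints_of_im_bil_eq_zero {z : Fin m → ℂ} (hN : lieNormSq z = 1)
    (him : (bil z).im = 0) (hlt : ‖bil z‖ < herm z) :
    z ∉ extremePoints ℝ (closedLieBall m) := by
  rw [norm_bil_of_im_eq_zero him, herm_eq_sum_re_sq_add_sum_im_sq] at hlt
  rw [lieNormSq_of_im_bil_eq_zero him] at hN
  set R := ∑ k, (z k).re ^ 2
  set J := ∑ k, (z k).im ^ 2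
  set s := √R
  set t := √J
  have hR : 0 < R := by linarith [abs_sub_lt_iff.1 hlt]
  have hJ : 0 < J := by linarith [abs_sub_lt_iff.1 hlt]
  have hs : 0 < s := Real.sqrt_pos.2 hR
  have ht : 0 < t := Real.sqrt_pos.2 hJ
  have hst : s + t = 1 := (pow_eq_one_iff_of_nonneg (by positivity) two_ne_zero).1 hN
  set x : Fin m → ℂ := fun k ↦ ((z k).re / s : ℝ)
  set y : Fin m → ℂ := I • fun k ↦ (((z k).im / t : ℝ) : ℂ)
  have hx : x ∈ closedLieBall m := by
    show lieNormSq x ≤ 1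
    simp only [x, lieNormSq_ofReal, div_pow, ← Finset.sum_div, s, Real.sq_sqrt hR.le]
    exact (div_self hR.ne').le
  have hy : y ∈ closedLieBall m := by
    show lieNormSq y ≤ 1
    simp only [y, lieNormSq_smul, norm_I, one_pow, one_mul, lieNormSq_ofReal, div_pow,
      ← Finset.sum_div, t, Real.sq_sqrt hJ.le]
    exact (div_self hJ.ne').le
  have hz : s • x + t • y = z := by
    funext k
    apply Complex.ext <;> simp [x, y] <;> field_simp
  have hxy : x ≠ y := by
    intro h
    have him0 : ∀ k, (z k).im = 0 := fun k ↦ by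
      have := congrArg im (congrFun h k)
      simp only [x, y, ofReal_im, Pi.smul_apply, smul_eq_mul, I_mul_im, ofReal_re] at this
      exact (div_eq_zero_iff.1 this.symm).resolve_right ht.ne'
    simp [J, him0] at hJ
  intro hext
  have := (mem_extremePoints.1 hext).2 x hx y hy ⟨s, t, hs, ht, hst, hz⟩
  exact hxy (this.1.trans this.2.symm)

theorem exists_norm_eq_one_sq_mul_eq_norm (b : ℂ) : ∃ c : ℂ, ‖c‖ = 1 ∧ c ^ 2 * b = ‖b‖ := by
  refine ⟨exp (↑(-b.arg / 2) * I), norm_exp_ofReal_mul_I _, ?_⟩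
  calc exp (↑(-b.arg / 2) * I) ^ 2 * b = exp (-(b.arg * I)) * (‖b‖ * exp (b.arg * I)) := by
        rw [norm_mul_exp_arg_mul_I, ← exp_nat_mul]
        push_cast
        ring_nf
    _ = ‖b‖ := by rw [mul_left_comm, ← exp_add, neg_add_cancel, exp_zero, mul_one]

theorem smul_mem_extremePoints_closedLieBall_iff {c : ℂ} (hc : ‖c‖ = 1) {z : Fin m → ℂ} :
    c • z ∈ extremePoints ℝ (closedLieBall m) ↔ z ∈ extremePoints ℝ (closedLieBall m) := by
  have hc₀ : c ≠ 0 := norm_ne_zero_iff.1 (hc ▸ one_ne_zero)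
  let e := (LinearEquiv.smulOfNeZero ℂ (Fin m → ℂ) c hc₀).restrictScalars ℝ
  have hball : ∀ w, e w ∈ closedLieBall m ↔ w ∈ closedLieBall m := fun w ↦ by
    simp [e, closedLieBall_eq, lieNormSq_smul, hc]
  have himage : e '' closedLieBall m = closedLieBall m := by
    ext w
    obtain ⟨v, rfl⟩ := e.surjective w
    rw [e.injective.mem_set_image, hball]
  calc c • z ∈ extremePoints ℝ (closedLieBall m)
      ↔ e z ∈ extremePoints ℝ (e '' closedLieBall m) := by rw [himage]; rfl
    _ ↔ z ∈ extremePoints ℝ (closedLieBall m) := by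
      rw [← image_extremePoints, e.injective.mem_set_image]

theorem notMem_extremePoints_of_norm_bil_lt_herm {z : Fin m → ℂ} (hN : lieNormSq z = 1)
    (hlt : ‖bil z‖ < herm z) : z ∉ extremePoints ℝ (closedLieBall m) := by
  obtain ⟨c, hc, hcb⟩ := exists_norm_eq_one_sq_mul_eq_norm (bil z)
  rw [← smul_mem_extremePoints_closedLieBall_iff hc]
  apply notMem_extremePoints_of_im_bil_eq_zero
  · rw [lieNormSq_smul, hc, hN, one_pow, one_mul]
  · rw [bil_smul, hcb, ofReal_im]
  · rwa [bil_smul, herm_smul, norm_mul, norm_pow, hc, one_pow, one_mul, one_mul]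

theorem lieNormSq_eq_one_of_mem_extremePoints [NeZero m] {z : Fin m → ℂ}
    (hz : z ∈ extremePoints ℝ (closedLieBall m)) : lieNormSq z = 1 := by
  by_contra hne
  have hint : z ∈ interior (closedLieBall m) :=
    interior_maximal (fun w (hw : lieNormSq w < 1) ↦ hw.le)
      (isOpen_lt continuous_lieNormSq continuous_const) (lt_of_le_of_ne hz.1 hne)
  exact (disjoint_interior_extremePoints _).ne_of_mem hint hz rfl

theorem setOf_herm_eq_one_subset_extremePoints :
    {z : Fin m → ℂ | herm z = 1} ⊆ extremePoints ℝ {z | herm z ≤ 1} := by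
  let e := WithLp.linearEquiv 2 ℝ (Fin m → ℂ)
  have hherm : ∀ v : EuclideanSpace ℂ (Fin m), herm (e v) = ‖v‖ ^ 2 := fun v ↦ by
    simp [herm, e, EuclideanSpace.norm_sq_eq, Complex.sq_norm]
  have himage : e '' Metric.closedBall 0 1 = {z | herm z ≤ 1} := by
    ext z
    obtain ⟨v, rfl⟩ := e.surjective z
    simp [e.injective.mem_set_image, hherm]
  intro z hz
  obtain ⟨v, rfl⟩ := e.surjective z
  rw [← himage, ← image_extremePoints, e.injective.mem_set_image]
  apply StrictConvexSpace.sphere_subset_extremePoints_closedBall 0 one_ne_zero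
  rw [mem_sphere_zero_iff_norm, ← pow_eq_one_iff_of_nonneg (norm_nonneg v) two_ne_zero,
    ← hherm]
  exact hz

theorem lieBallShilov_subset_extremePoints :
    lieBallShilov m ⊆ extremePoints ℝ (closedLieBall m) := by
  rintro z ⟨hherm, hbil⟩
  have hN : lieNormSq z = 1 := by
    rw [lieNormSq, show herm z = 1 from hherm, show ‖bil z‖ = 1 from hbil]
    norm_num
  refine inter_extremePoints_subset_extremePoints_of_subset (B := closedLieBall m) ?_
    ⟨hN.le, setOf_herm_eq_one_subset_extremePoints hherm⟩
  exact fun w (hw : lieNormSq w ≤ 1) ↦ (herm_le_lieNormSq w).trans hw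

end LieBall

open LieBall

/-- The set of extreme points of the closed Lie ball equals its Shilov boundary. -/
theorem extremePoints_closedLieBall {m : ℕ} (hm : 1 ≤ m) :
    Set.extremePoints ℝ (closedLieBall m) = lieBallShilov m := by
  refine Set.Subset.antisymm (fun z hz ↦ ?_) lieBallShilov_subset_extremePoints
  have : NeZero m := ⟨by omega⟩
  have hN := lieNormSq_eq_one_of_mem_extremePoints hz
  have hbil : ‖bil z‖ = herm z := (norm_bil_le_herm z).eq_or_lt.resolve_right
    fun hlt ↦ notMem_extremePoints_of_norm_bil_lt_herm hN hlt hz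
  have hherm : herm z = 1 := by
    rwa [lieNormSq, hbil, sub_self, Real.sqrt_zero, add_zero] at hN
  exact ⟨hherm, hbil.trans hherm⟩
end

section
/- Let r ≥ 1. Set H = {z ∈ ℂ^{r×r} : (z + zᴴ)/2 is positive definite} and D = {z ∈ ℂ^{r×r} : 1 − zᴴ z is positive definite}, where zᴴ denotes the conjugate transpose. Then: for every z ∈ H the matrix z + 1 is invertible and γ(z) := (z − 1)(z + 1)^{−1} lies in D; for every w ∈ D the matrix 1 − w is invertible and (1 + w)(1 − w)^{−1} lies in H; and the two maps so defined are mutually inverse bijections between H and D. (Thus the Cayley transformation γ maps the tube domain over the cone of positive definite Hermitian matrices biholomorphically onto the matrix unit ball.) -/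
open Matrix
open scoped ComplexOrder

/-- The matrix upper half space: `r × r` complex matrices whose Hermitian part `(z + zᴴ)/2`
is positive definite (the tube domain over the cone of positive definite Hermitian matrices). -/
def matrixHalfSpace (r : ℕ) : Set (Matrix (Fin r) (Fin r) ℂ) :=
  {z | (((2 : ℂ)⁻¹) • (z + zᴴ)).PosDef}

/-- The matrix unit ball: `r × r` complex matrices `w` with `1 − wᴴ w` positive definite. -/
def matrixBall (r : ℕ) : Set (Matrix (Fin r) (Fin r) ℂ) :=
  {w | ((1 : Matrix (Fin r) (Fin r) ℂ) - wᴴ * w).PosDef}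

/-!
Write `cayley z = v * u⁻¹` with `u = z + 1`, `v = z - 1`. Then `1 - (cayley z)ᴴ * cayley z` is the
congruence `(u⁻¹)ᴴ * (uᴴ * u - vᴴ * v) * u⁻¹` of `uᴴ * u - vᴴ * v = 2 (z + zᴴ)`; symmetrically, for
`c = cayleyInv w`, `c + cᴴ` is a congruence of `2 (1 - wᴴ * w)` by `(1 - w)⁻¹`. Congruence by an
invertible matrix preserves positive definiteness. A matrix with positive definite Hermitian part
has trivial kernel; this makes `z + 1` invertible, and also `1 - w`, since
`(1 - w) + (1 - w)ᴴ = (1 - w)ᴴ * (1 - w) + (1 - wᴴ * w)`. Finally `1 ± v * u⁻¹ = (u ± v) * u⁻¹`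
with `u + v = 2 z` and `u - v = 2`, so the two transformations are mutually inverse.
-/

namespace Matrix
variable {n R K : Type*} [Fintype n] [DecidableEq n]

section CommRing
variable [CommRing R]

noncomputable def cayley (z : Matrix n n R) : Matrix n n R := (z - 1) * (z + 1)⁻¹

noncomputable def cayleyInv (w : Matrix n n R) : Matrix n n R := (1 + w) * (1 - w)⁻¹

variable {u : Matrix n n R}

theorem mul_inv_mul_mul_inv_inv (hu : IsUnit u) (a b : Matrix n n R) :
    a * u⁻¹ * (b * u⁻¹)⁻¹ = a * b⁻¹ := by
  have hdet := (isUnit_iff_isUnit_det u).1 hu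
  rw [mul_inv_rev, nonsing_inv_nonsing_inv u hdet, Matrix.mul_assoc, ← Matrix.mul_assoc u⁻¹,
    nonsing_inv_mul u hdet, Matrix.one_mul]

theorem one_add_mul_inv (hu : IsUnit u) (v : Matrix n n R) : 1 + v * u⁻¹ = (u + v) * u⁻¹ := by
  rw [Matrix.add_mul, mul_nonsing_inv u ((isUnit_iff_isUnit_det u).1 hu)]

theorem one_sub_mul_inv (hu : IsUnit u) (v : Matrix n n R) : 1 - v * u⁻¹ = (u - v) * u⁻¹ := by
  rw [Matrix.sub_mul, mul_nonsing_inv u ((isUnit_iff_isUnit_det u).1 hu)]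

theorem mul_inv_add_one (hu : IsUnit u) (v : Matrix n n R) : v * u⁻¹ + 1 = (v + u) * u⁻¹ := by
  rw [Matrix.add_mul, mul_nonsing_inv u ((isUnit_iff_isUnit_det u).1 hu)]

theorem mul_inv_sub_one (hu : IsUnit u) (v : Matrix n n R) : v * u⁻¹ - 1 = (v - u) * u⁻¹ := by
  rw [Matrix.sub_mul, mul_nonsing_inv u ((isUnit_iff_isUnit_det u).1 hu)]

variable [StarRing R]

theorem conjTranspose_inv_mul_conjTranspose (hu : IsUnit u) : (u⁻¹)ᴴ * uᴴ = 1 := by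
  rw [← conjTranspose_mul, mul_nonsing_inv u ((isUnit_iff_isUnit_det u).1 hu), conjTranspose_one]

theorem one_sub_conjTranspose_mul_self_mul_inv (hu : IsUnit u) (v : Matrix n n R) :
    1 - (v * u⁻¹)ᴴ * (v * u⁻¹) = (u⁻¹)ᴴ * (uᴴ * u - vᴴ * v) * u⁻¹ :=
  calc 1 - (v * u⁻¹)ᴴ * (v * u⁻¹)
        = (u⁻¹)ᴴ * uᴴ * (u * u⁻¹) - (u⁻¹)ᴴ * vᴴ * (v * u⁻¹) := by
        rw [conjTranspose_inv_mul_conjTranspose hu,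
          mul_nonsing_inv u ((isUnit_iff_isUnit_det u).1 hu), conjTranspose_mul, Matrix.mul_one]
    _ = (u⁻¹)ᴴ * (uᴴ * u - vᴴ * v) * u⁻¹ := by noncomm_ring

theorem mul_inv_add_conjTranspose (hu : IsUnit u) (v : Matrix n n R) :
    v * u⁻¹ + (v * u⁻¹)ᴴ = (u⁻¹)ᴴ * (uᴴ * v + vᴴ * u) * u⁻¹ :=
  calc v * u⁻¹ + (v * u⁻¹)ᴴ
        = (u⁻¹)ᴴ * uᴴ * (v * u⁻¹) + (u⁻¹)ᴴ * vᴴ * (u * u⁻¹) := by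
        rw [conjTranspose_inv_mul_conjTranspose hu,
          mul_nonsing_inv u ((isUnit_iff_isUnit_det u).1 hu), conjTranspose_mul, Matrix.mul_one,
          Matrix.one_mul]
    _ = (u⁻¹)ᴴ * (uᴴ * v + vᴴ * u) * u⁻¹ := by noncomm_ring

end CommRing

section Field
variable [Field K]

theorem smul_mul_inv_smul_one {c : K} (hc : c ≠ 0) (a : Matrix n n K) :
    c • a * (c • (1 : Matrix n n K))⁻¹ = a := by
  rw [inv_eq_right_inv (B := c⁻¹ • 1) (by simp [smul_smul, hc])]
  simp [smul_smul, hc]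

theorem cayleyInv_cayley [NeZero (2 : K)] {z : Matrix n n K} (hz : IsUnit (z + 1)) :
    cayleyInv (cayley z) = z :=
  calc cayleyInv (cayley z) = (z + 1 + (z - 1)) * (z + 1 - (z - 1))⁻¹ := by
        rw [cayleyInv, cayley, one_add_mul_inv hz, one_sub_mul_inv hz, mul_inv_mul_mul_inv_inv hz]
    _ = (2 : K) • z * ((2 : K) • (1 : Matrix n n K))⁻¹ := by congr 2 <;> module
    _ = z := smul_mul_inv_smul_one two_ne_zero z

theorem cayley_cayleyInv [NeZero (2 : K)] {w : Matrix n n K} (hw : IsUnit (1 - w)) :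
    cayley (cayleyInv w) = w :=
  calc cayley (cayleyInv w) = (1 + w - (1 - w)) * (1 + w + (1 - w))⁻¹ := by
        rw [cayleyInv, cayley, mul_inv_add_one hw, mul_inv_sub_one hw, mul_inv_mul_mul_inv_inv hw]
    _ = (2 : K) • w * ((2 : K) • (1 : Matrix n n K))⁻¹ := by congr 2 <;> module
    _ = w := smul_mul_inv_smul_one two_ne_zero w

variable [PartialOrder K] [StarRing K]

theorem isUnit_of_posDef_add_conjTranspose {a : Matrix n n K} (ha : (a + aᴴ).PosDef) :
    IsUnit a := by
  rw [isUnit_iff_isUnit_det, isUnit_iff_ne_zero, Ne, ← exists_mulVec_eq_zero_iff]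
  rintro ⟨v, hv, hav⟩
  have hpos := ha.dotProduct_mulVec_pos hv
  rw [add_mulVec, hav, zero_add, dotProduct_mulVec, ← star_mulVec, hav] at hpos
  simp at hpos

variable [StarOrderedRing K]

theorem isUnit_add_one_of_posDef_add_conjTranspose {z : Matrix n n K} (hz : (z + zᴴ).PosDef) :
    IsUnit (z + 1) := by
  refine isUnit_of_posDef_add_conjTranspose ?_
  rw [conjTranspose_add, conjTranspose_one, add_add_add_comm]
  exact hz.add (PosDef.one.add PosDef.one)

theorem isUnit_one_sub_of_posDef_one_sub_conjTranspose_mul_self {w : Matrix n n K}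
    (hw : (1 - wᴴ * w).PosDef) : IsUnit (1 - w) := by
  refine isUnit_of_posDef_add_conjTranspose ?_
  have hsum : 1 - w + (1 - w)ᴴ = (1 - w)ᴴ * (1 - w) + (1 - wᴴ * w) := by
    rw [conjTranspose_sub, conjTranspose_one]; noncomm_ring
  rw [hsum]
  exact hw.posSemidef_add (posSemidef_conjTranspose_mul_self _)

theorem posDef_one_sub_conjTranspose_mul_self_cayley {z : Matrix n n K}
    (hz : (z + zᴴ).PosDef) : (1 - (cayley z)ᴴ * cayley z).PosDef := by
  have hu := isUnit_add_one_of_posDef_add_conjTranspose hz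
  have hdiff : (z + 1)ᴴ * (z + 1) - (z - 1)ᴴ * (z - 1) = (z + zᴴ) + (z + zᴴ) := by
    rw [conjTranspose_add, conjTranspose_sub, conjTranspose_one]; noncomm_ring
  rw [cayley, one_sub_conjTranspose_mul_self_mul_inv hu, hdiff, ← star_eq_conjTranspose,
    IsUnit.posDef_star_left_conjugate_iff (isUnit_nonsing_inv_iff.2 hu)]
  exact hz.add hz

theorem posDef_cayleyInv_add_conjTranspose {w : Matrix n n K}
    (hw : (1 - wᴴ * w).PosDef) : (cayleyInv w + (cayleyInv w)ᴴ).PosDef := by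
  have hu := isUnit_one_sub_of_posDef_one_sub_conjTranspose_mul_self hw
  have hsum : (1 - w)ᴴ * (1 + w) + (1 + w)ᴴ * (1 - w) = (1 - wᴴ * w) + (1 - wᴴ * w) := by
    rw [conjTranspose_add, conjTranspose_sub, conjTranspose_one]; noncomm_ring
  rw [cayleyInv, mul_inv_add_conjTranspose hu, hsum, ← star_eq_conjTranspose,
    IsUnit.posDef_star_left_conjugate_iff (isUnit_nonsing_inv_iff.2 hu)]
  exact hw.add hw

end Field

end Matrix

theorem mem_matrixHalfSpace_iff {r : ℕ} {z : Matrix (Fin r) (Fin r) ℂ} :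
    z ∈ matrixHalfSpace r ↔ (z + zᴴ).PosDef := by
  refine ⟨fun hz => ?_, fun hz => hz.smul (by norm_num)⟩
  simpa [smul_smul] using hz.smul (two_pos : (0 : ℂ) < 2)

theorem cayley_transform_matrix_general {r : ℕ} :
    (∀ z ∈ matrixHalfSpace r, IsUnit (z + 1) ∧ (z - 1) * (z + 1)⁻¹ ∈ matrixBall r) ∧
    (∀ w ∈ matrixBall r, IsUnit (1 - w) ∧ (1 + w) * (1 - w)⁻¹ ∈ matrixHalfSpace r) ∧
    (∀ z ∈ matrixHalfSpace r, (1 + (z - 1) * (z + 1)⁻¹) * (1 - (z - 1) * (z + 1)⁻¹)⁻¹ = z) ∧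
    (∀ w ∈ matrixBall r, ((1 + w) * (1 - w)⁻¹ - 1) * ((1 + w) * (1 - w)⁻¹ + 1)⁻¹ = w) := by
  have hH {z} (hz : z ∈ matrixHalfSpace r) := mem_matrixHalfSpace_iff.1 hz
  refine ⟨fun z hz => ⟨?_, ?_⟩, fun w hw => ⟨?_, ?_⟩, fun z hz => ?_, fun w hw => ?_⟩
  · exact isUnit_add_one_of_posDef_add_conjTranspose (hH hz)
  · exact posDef_one_sub_conjTranspose_mul_self_cayley (hH hz)
  · exact isUnit_one_sub_of_posDef_one_sub_conjTranspose_mul_self hw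
  · exact mem_matrixHalfSpace_iff.2 (posDef_cayleyInv_add_conjTranspose hw)
  · exact cayleyInv_cayley (isUnit_add_one_of_posDef_add_conjTranspose (hH hz))
  · exact cayley_cayleyInv (isUnit_one_sub_of_posDef_one_sub_conjTranspose_mul_self hw)

/-- The Cayley transformation `γ(z) = (z − 1)(z + 1)⁻¹` maps the tube domain `H` over the cone
of positive definite Hermitian matrices bijectively onto the matrix unit ball `D`, with inverse
`w ↦ (1 + w)(1 − w)⁻¹`; in particular `z + 1` is invertible for `z ∈ H` and `1 − w` is
invertible for `w ∈ D`. -/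
theorem cayley_transform_matrix {r : ℕ} (hr : 1 ≤ r) :
    (∀ z ∈ matrixHalfSpace r, IsUnit (z + 1) ∧ (z - 1) * (z + 1)⁻¹ ∈ matrixBall r) ∧
    (∀ w ∈ matrixBall r, IsUnit (1 - w) ∧ (1 + w) * (1 - w)⁻¹ ∈ matrixHalfSpace r) ∧
    (∀ z ∈ matrixHalfSpace r, (1 + (z - 1) * (z + 1)⁻¹) * (1 - (z - 1) * (z + 1)⁻¹)⁻¹ = z) ∧
    (∀ w ∈ matrixBall r, ((1 + w) * (1 - w)⁻¹ - 1) * ((1 + w) * (1 - w)⁻¹ + 1)⁻¹ = w) :=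
  cayley_transform_matrix_general
end
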